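/- arXiv:2201.04380 — 6 statements merged into one kernel-verified Lean document; each statement's English description precedes it below -/
import Mathlib

section
/- Let (Y,d) be a four-point semimetric space belonging to the class UBPP. Then the set D(Y) of nonzero distances of (Y,d) contains at least 5 elements. -/
open Set

universe u v

/-- A semimetric on `X`: a symmetric, nonnegative function vanishing exactly on the diagonal. -/
def IsSemimetric {X : Type u} (d : X → X → ℝ) : Prop :=
  (∀ x y, 0 ≤ d x y) ∧ (∀ x y, d x y = d y x) ∧ (∀ x y, d x y = 0 ↔ x = y)

/-- A metric: a semimetric satisfying the triangle inequality. -/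
def IsMetricD {X : Type u} (d : X → X → ℝ) : Prop :=
  IsSemimetric d ∧ ∀ x y z, d x y ≤ d x z + d z y

/-- An ultrametric: a semimetric satisfying the strong triangle inequality. -/
def IsUltrametricD {X : Type u} (d : X → X → ℝ) : Prop :=
  IsSemimetric d ∧ ∀ x y z, d x y ≤ max (d x z) (d z y)

/-- `sDist d A B = inf {d a b : a ∈ A, b ∈ B}`. -/
noncomputable def sDist {X : Type u} (d : X → X → ℝ) (A B : Set X) : ℝ :=
  sInf {r | ∃ a ∈ A, ∃ b ∈ B, d a b = r}

/-- `pDist d x A = inf {d x a : a ∈ A}`. -/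
noncomputable def pDist {X : Type u} (d : X → X → ℝ) (x : X) (A : Set X) : ℝ :=
  sInf {r | ∃ a ∈ A, d x a = r}

/-- `A` is proximinal: every point of `X` has a best approximation in `A`. -/
def Proximinal {X : Type u} (d : X → X → ℝ) (A : Set X) : Prop :=
  ∀ x : X, ∃ a ∈ A, d x a = pDist d x A

/-- Strong rigidity: distinct pairs of distinct points have distinct distances. -/
def StronglyRigid {X : Type u} (d : X → X → ℝ) : Prop :=
  ∀ x y u v : X, x ≠ y → d x y = d u v → ({x, y} : Set X) = {u, v}

/-- Strong rigidity of the subspace `S`. -/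
def StronglyRigidOn {X : Type u} (d : X → X → ℝ) (S : Set X) : Prop :=
  ∀ x ∈ S, ∀ y ∈ S, ∀ u ∈ S, ∀ v ∈ S, x ≠ y → d x y = d u v → ({x, y} : Set X) = {u, v}

/-- Weak rigidity: every three-point subspace is strongly rigid. -/
def WeaklyRigid {X : Type u} (d : X → X → ℝ) : Prop :=
  ∀ S : Set X, S.encard = 3 → StronglyRigidOn d S

/-- The class UBPP: any two disjoint proximinal subsets admit at most one best proximity pair. -/
def UBPP {X : Type u} (d : X → X → ℝ) : Prop :=
  ∀ A B : Set X, Disjoint A B → Proximinal d A → Proximinal d B →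
    ∀ a₁ ∈ A, ∀ b₁ ∈ B, ∀ a₂ ∈ A, ∀ b₂ ∈ B,
      d a₁ b₁ = sDist d A B → d a₂ b₂ = sDist d A B → a₁ = a₂ ∧ b₁ = b₂

/-- `D(X)`: the set of all nonzero distances. -/
def DistSet {X : Type u} (d : X → X → ℝ) : Set ℝ :=
  {r | ∃ x y : X, x ≠ y ∧ d x y = r}

/-- The unordered pairs of distinct points whose distance is `r`. -/
def PairsAt {X : Type u} (d : X → X → ℝ) (r : ℝ) : Set (Set X) :=
  {s | ∃ x y : X, x ≠ y ∧ d x y = r ∧ s = {x, y}}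

/-- All distances between distinct unordered pairs of distinct points are pairwise distinct. -/
def AllDistinct {X : Type u} (d : X → X → ℝ) : Prop :=
  ∀ x y u v : X, x ≠ y → u ≠ v → d x y = d u v → ({x, y} : Set X) = {u, v}

/-- A weak similarity of `(X,d)` and `(Y,ρ)`. -/
def WeakSimilarity {X : Type u} {Y : Type v} (d : X → X → ℝ) (ρ : Y → Y → ℝ)
    (Φ : X → Y) : Prop :=
  Function.Bijective Φ ∧ ∃ ψ : ℝ → ℝ, Set.BijOn ψ (DistSet ρ) (DistSet d) ∧
    StrictMonoOn ψ (DistSet ρ) ∧ ∀ x y : X, x ≠ y → d x y = ψ (ρ (Φ x) (Φ y))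

/-- The four-point semimetric space `(X*, ρ*)` of Example 3.4, with points
`a₁ = 0, a₂ = 1, b₁ = 2, b₂ = 3`. -/
noncomputable def rhoStar : Fin 4 → Fin 4 → ℝ := fun i j =>
  !![(0 : ℝ), 5, 3, 1; 5, 0, 2, 3; 3, 2, 0, 4; 1, 3, 4, 0] i j

/-- The restriction of a semimetric to the subspace `Y`. -/
def restrictS {X : Type u} (d : X → X → ℝ) (Y : Set X) : ↥Y → ↥Y → ℝ :=
  fun a b => d a.1 b.1

/-- The condition that the digraph `Di_Y` of a four-point space is isomorphic to one of
`Di¹, Di², Di³, Di⁴`: either all six distances are pairwise distinct, or there are exactly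
five distance values, exactly one of which is attained by exactly two unordered pairs,
each other value by exactly one pair, and the repeated value has at least two values below it. -/
def DiOK {X : Type u} (d : X → X → ℝ) : Prop :=
  AllDistinct d ∨
    ((DistSet d).ncard = 5 ∧ ∃ c ∈ DistSet d,
      (PairsAt d c).ncard = 2 ∧
      (∀ r ∈ DistSet d, r ≠ c → (PairsAt d r).ncard = 1) ∧
      2 ≤ ({r ∈ DistSet d | r < c}).ncard)

lemma pair_prox {X : Type u} (d : X → X → ℝ) (a b : X) :
    Proximinal d {a, b} := by
  intro x
  have hset : {r | ∃ t ∈ ({a, b} : Set X), d x t = r} = {d x a, d x b} := by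
    ext r; constructor
    · rintro ⟨t, ht, rfl⟩
      rcases ht with rfl | rfl <;> simp
    · rintro (rfl | rfl)
      exacts [⟨a, by simp⟩, ⟨b, by simp⟩]
  rcases le_total (d x a) (d x b) with hle | hle
  · exact ⟨a, by simp, by rw [pDist, hset, csInf_pair]; exact (min_eq_left hle).symm⟩
  · exact ⟨b, by simp, by rw [pDist, hset, csInf_pair]; exact (min_eq_right hle).symm⟩

lemma singleton_prox {X : Type u} (d : X → X → ℝ) (a : X) :
    Proximinal d {a} := by
  intro x
  have hset : {r | ∃ t ∈ ({a} : Set X), d x t = r} = {d x a} := by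
    ext r; simp
  exact ⟨a, by simp, by rw [pDist, hset, csInf_singleton]⟩

/-- No isoceles: from UBPP, distances from a common vertex are distinct. -/
lemma no_iso {X : Type u} {d : X → X → ℝ} (h : UBPP d)
    {x u v : X} (hxu : x ≠ u) (hxv : x ≠ v) (heq : d x u = d x v) : u = v := by
  have hdisj : Disjoint ({x} : Set X) {u, v} := by
    simp [Set.disjoint_left, hxu, hxv]
  have hset : {r | ∃ a ∈ ({x} : Set X), ∃ b ∈ ({u, v} : Set X), d a b = r}
      = {d x u, d x v} := by
    ext r; constructor
    · rintro ⟨a, rfl, b, hb, rfl⟩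
      rcases hb with rfl | rfl <;> simp
    · rintro (rfl | rfl)
      exacts [⟨x, rfl, u, by simp⟩, ⟨x, rfl, v, by simp⟩]
  have hs : sDist d {x} {u, v} = d x u := by
    rw [sDist, hset, csInf_pair, ← heq, min_self]
  have := h {x} {u, v} hdisj (singleton_prox d x) (pair_prox d u v)
    x rfl u (by simp) x rfl v (by simp) hs.symm (by rw [hs, heq])
  exact this.2

/-- No two "matching" equalities: key UBPP contradiction. -/
lemma no_match {X : Type u} {d : X → X → ℝ} (hd : IsSemimetric d) (h : UBPP d)
    {p q r s : X} (hpq : p ≠ q) (hpr : p ≠ r) (hps : p ≠ s)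
    (hqr : q ≠ r) (hqs : q ≠ s) (hrs : r ≠ s)
    (e1 : d p q = d r s) (e2 : d p r = d q s) : False := by
  obtain ⟨-, hsym, -⟩ := hd
  have hdisj : Disjoint ({p, s} : Set X) {q, r} := by
    simp [Set.disjoint_left, hpq, hpr, hqs.symm, hrs.symm]
  have hsq : d s q = d p r := by rw [hsym, ← e2]
  have hsr : d s r = d p q := by rw [hsym s r, ← e1]
  have hset : {t | ∃ a ∈ ({p, s} : Set X), ∃ b ∈ ({q, r} : Set X), d a b = t}
      = {d p q, d p r} := by
    ext t; constructor
    · rintro ⟨a, ha, b, hb, rfl⟩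
      rcases ha with rfl | rfl <;> rcases hb with rfl | rfl <;>
        simp [hsq, hsr]
    · rintro (rfl | rfl)
      exacts [⟨p, by simp, q, by simp, rfl⟩, ⟨p, by simp, r, by simp, rfl⟩]
  have hPA := pair_prox d p s
  have hPB := pair_prox d q r
  rcases le_total (d p q) (d p r) with hle | hle
  · have hs1 : sDist d {p, s} {q, r} = d p q := by
      rw [sDist, hset, csInf_pair]; exact min_eq_left hle
    have := h {p, s} {q, r} hdisj hPA hPB p (by simp) q (by simp)
      s (by simp) r (by simp) hs1.symm (by rw [hs1, hsr])
    exact hps this.1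
  · have hs1 : sDist d {p, s} {q, r} = d p r := by
      rw [sDist, hset, csInf_pair]; exact min_eq_right hle
    have := h {p, s} {q, r} hdisj hPA hPB p (by simp) r (by simp)
      s (by simp) q (by simp) hs1.symm (by rw [hs1, hsq])
    exact hps this.1

lemma five_le {X : Type u} [Finite X] {d : X → X → ℝ} (hd : IsSemimetric d) (h : UBPP d)
    {p q r s : X} (hpq : p ≠ q) (hpr : p ≠ r) (hps : p ≠ s)
    (hqr : q ≠ r) (hqs : q ≠ s) (hrs : r ≠ s)
    (h1 : d p r ≠ d q s) (h2 : d p s ≠ d q r) : 5 ≤ (DistSet d).ncard := by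
  obtain ⟨-, hsym, -⟩ := hd
  have n12 : d p q ≠ d p r := fun he => hqr (no_iso h hpq hpr he)
  have n13 : d p q ≠ d p s := fun he => hqs (no_iso h hpq hps he)
  have n14 : d p q ≠ d q r := fun he => hpr (no_iso h hpq.symm hqr (by rw [hsym q p]; exact he))
  have n15 : d p q ≠ d q s := fun he => hps (no_iso h hpq.symm hqs (by rw [hsym q p]; exact he))
  have n23 : d p r ≠ d p s := fun he => hrs (no_iso h hpr hps he)
  have n24 : d p r ≠ d q r := fun he =>
    hpq (no_iso h hpr.symm hqr.symm (by rw [hsym r p, hsym r q]; exact he))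
  have n35 : d p s ≠ d q s := fun he =>
    hpq (no_iso h hps.symm hqs.symm (by rw [hsym s p, hsym s q]; exact he))
  have n45 : d q r ≠ d q s := fun he => hrs (no_iso h hqr hqs he)
  have hfin : (DistSet d).Finite :=
    (Set.finite_range fun z : X × X => d z.1 z.2).subset (by rintro t ⟨x, y, -, rfl⟩; exact ⟨(x, y), rfl⟩)
  have hsub : ({d p q, d p r, d p s, d q r, d q s} : Set ℝ) ⊆ DistSet d := by
    rintro t ht
    rcases ht with rfl | rfl | rfl | rfl | rfl
    exacts [⟨p, q, hpq, rfl⟩, ⟨p, r, hpr, rfl⟩, ⟨p, s, hps, rfl⟩, ⟨q, r, hqr, rfl⟩, ⟨q, s, hqs, rfl⟩]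
  have hcard5 : ({d p q, d p r, d p s, d q r, d q s} : Set ℝ).ncard = 5 := by
    rw [Set.ncard_insert_of_notMem (by simp [n12, n13, n14, n15]),
        Set.ncard_insert_of_notMem (by simp [n23, n24, h1]),
        Set.ncard_insert_of_notMem (by simp [h2, n35]),
        Set.ncard_pair n45]
  calc 5 = ({d p q, d p r, d p s, d q r, d q s} : Set ℝ).ncard := hcard5.symm
    _ ≤ (DistSet d).ncard := Set.ncard_le_ncard hsub hfin

/-- A four-point semimetric space of class UBPP has at least five distinct
nonzero distances. -/
theorem stmt_9 {Y : Type u} (d : Y → Y → ℝ) (hd : IsSemimetric d)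
    (hcard : Nat.card Y = 4) (h : UBPP d) :
    5 ≤ (DistSet d).ncard := by
  have : Finite Y := Nat.finite_of_card_ne_zero (by omega)
  obtain ⟨-, hsym, -⟩ := id hd
  let e := Finite.equivFinOfCardEq hcard
  set a := e.symm 0 with ha
  set b := e.symm 1 with hb
  set c := e.symm 2 with hc
  set f := e.symm 3 with hf
  have hab : a ≠ b := e.symm.injective.ne (by decide)
  have hac : a ≠ c := e.symm.injective.ne (by decide)
  have haf : a ≠ f := e.symm.injective.ne (by decide)
  have hbc : b ≠ c := e.symm.injective.ne (by decide)
  have hbf : b ≠ f := e.symm.injective.ne (by decide)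
  have hcf : c ≠ f := e.symm.injective.ne (by decide)
  by_cases h2 : d a c = d b f
  · -- then the other two matching equalities fail
    have m1 : d a b ≠ d c f := fun he => no_match hd h hab hac haf hbc hbf hcf he h2
    have m3 : d a f ≠ d c b := fun he =>
      no_match hd h haf hac hab hcf.symm hbf.symm hbc.symm he (h2.trans (hsym b f))
    exact five_le hd h hac hab haf hbc.symm hcf hbf m1 m3
  · by_cases h3 : d a f = d b c
    · have m1 : d a b ≠ d c f := fun he =>
        no_match hd h hab haf hac hbf hbc hcf.symm (he.trans (hsym c f)) h3
      exact five_le hd h haf hab hac hbf.symm hcf.symm hbc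
        (fun he => m1 (he.trans (hsym f c))) (fun he => h2 (he.trans (hsym f b)))
    · exact five_le hd h hab hac haf hbc hbf hcf h2 h3
end

section
/- Let (Y,d) be a four-point semimetric space belonging to the class UBPP. Then there is a unique unordered pair {x¹,y¹} of distinct points of Y such that d(x¹,y¹) = min D(Y); moreover, there is a unique unordered pair {x²,y²} of distinct points of Y such that d(x²,y²) equals the smallest element of D(Y) \ {min D(Y)}. -/
open Set

universe u v

lemma prox_of_finite {Y : Type u} [Finite Y] (d : Y → Y → ℝ) {A : Set Y} (hA : A.Nonempty) :
    Proximinal d A := by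
  intro x
  have hfin : {r | ∃ a ∈ A, d x a = r}.Finite :=
    (Set.finite_range (d x)).subset (by rintro r ⟨a, _, rfl⟩; exact ⟨a, rfl⟩)
  have hne : {r | ∃ a ∈ A, d x a = r}.Nonempty := ⟨d x hA.choose, hA.choose, hA.choose_spec, rfl⟩
  have := hne.csInf_mem hfin
  obtain ⟨a, ha, hda⟩ := this
  exact ⟨a, ha, hda⟩

lemma sDist_eq {Y : Type u} (d : Y → Y → ℝ) {A B : Set Y} {c : ℝ}
    (hlb : ∀ a ∈ A, ∀ b ∈ B, c ≤ d a b)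
    (hmem : ∃ a ∈ A, ∃ b ∈ B, d a b = c) : sDist d A B = c := by
  apply le_antisymm
  · exact csInf_le ⟨c, by rintro r ⟨a, ha, b, hb, rfl⟩; exact hlb a ha b hb⟩ hmem
  · exact le_csInf ⟨c, hmem⟩ (by rintro r ⟨a, ha, b, hb, rfl⟩; exact hlb a ha b hb)

lemma ubpp_neq {Y : Type u} [Finite Y] {d : Y → Y → ℝ} (h : UBPP d)
    {x y w : Y} (hxy : x ≠ y) (hxw : x ≠ w) (hyw : y ≠ w) : d x y ≠ d x w := by
  intro heq
  have hdisj : Disjoint ({x} : Set Y) {y, w} := by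
    rw [Set.disjoint_left]
    rintro z rfl ⟨rfl | rfl⟩ <;> simp_all
  have hs : sDist d {x} {y, w} = d x y := by
    apply sDist_eq
    · rintro a rfl b (rfl | rfl)
      · exact le_refl _
      · exact le_of_eq heq
    · exact ⟨x, rfl, y, Or.inl rfl, rfl⟩
  have := h {x} {y, w} hdisj (prox_of_finite d ⟨x, rfl⟩) (prox_of_finite d ⟨y, Or.inl rfl⟩)
    x rfl y (Or.inl rfl) x rfl w (Or.inr rfl) (by rw [hs]) (by rw [hs, heq])
  exact hyw this.2

lemma unique_pair_aux {Y : Type u} [Finite Y] {d : Y → Y → ℝ} (hd : IsSemimetric d) (h : UBPP d)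
    {x y u w : Y} (hxy : x ≠ y) (huw : u ≠ w) (heq : d x y = d u w)
    (hne : ({x, y} : Set Y) ≠ {u, w}) :
    x ≠ u ∧ x ≠ w ∧ y ≠ u ∧ y ≠ w := by
  obtain ⟨_, hsym, _⟩ := hd
  refine ⟨?_, ?_, ?_, ?_⟩
  · rintro rfl
    have hyw : y ≠ w := by rintro rfl; exact hne rfl
    exact ubpp_neq h hxy huw hyw heq
  · rintro rfl
    have hyu : y ≠ u := by
      rintro rfl
      exact hne (Set.pair_comm x y)
    exact ubpp_neq h hxy (Ne.symm huw) hyu (heq.trans (hsym u x))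
  · rintro rfl
    have hxw : x ≠ w := by rintro rfl; exact hne (Set.pair_comm x y)
    exact ubpp_neq h (Ne.symm hxy) huw hxw ((hsym y x).trans heq)
  · rintro rfl
    have hxu : x ≠ u := by rintro rfl; exact hne rfl
    exact ubpp_neq h (Ne.symm hxy) (Ne.symm huw) hxu
      (((hsym y x).trans heq).trans (hsym u y))
/-- In a four-point UBPP semimetric space there is a unique unordered pair of
distinct points realizing `min D(Y)`, and a unique unordered pair realizing the smallest
element of `D(Y) \ {min D(Y)}`. -/
theorem stmt_10 {Y : Type u} (d : Y → Y → ℝ) (hd : IsSemimetric d)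
    (hcard : Nat.card Y = 4) (h : UBPP d) :
    ((∃ x y : Y, x ≠ y ∧ d x y = sInf (DistSet d)) ∧
      (∀ x y u w : Y, x ≠ y → u ≠ w → d x y = sInf (DistSet d) →
        d u w = sInf (DistSet d) → ({x, y} : Set Y) = {u, w})) ∧
    ((∃ x y : Y, x ≠ y ∧ d x y = sInf (DistSet d \ {sInf (DistSet d)})) ∧
      (∀ x y u w : Y, x ≠ y → u ≠ w → d x y = sInf (DistSet d \ {sInf (DistSet d)}) →
        d u w = sInf (DistSet d \ {sInf (DistSet d)}) → ({x, y} : Set Y) = {u, w})) := by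
  have hsym := hd.2.1
  haveI : Finite Y := Nat.finite_of_card_ne_zero (by omega)
  haveI := Fintype.ofFinite Y
  have hc : Fintype.card Y = 4 := by rw [← Nat.card_eq_fintype_card]; exact hcard
  let e := Fintype.equivFinOfCardEq hc
  set p0 := e.symm 0 with hp0d
  set p1 := e.symm 1 with hp1d
  set p2 := e.symm 2 with hp2d
  have hp01 : p0 ≠ p1 := e.symm.injective.ne (by decide)
  have hp02 : p0 ≠ p2 := e.symm.injective.ne (by decide)
  have hp12 : p1 ≠ p2 := e.symm.injective.ne (by decide)
  have hfinD : (DistSet d).Finite :=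
    (Set.finite_range fun p : Y × Y => d p.1 p.2).subset
      (by rintro r ⟨a, b, _, rfl⟩; exact ⟨(a, b), rfl⟩)
  have hneD : (DistSet d).Nonempty := ⟨d p0 p1, p0, p1, hp01, rfl⟩
  set m := sInf (DistSet d) with hm
  have hmD : m ∈ DistSet d := hneD.csInf_mem hfinD
  have hlow : ∀ a b : Y, a ≠ b → m ≤ d a b := fun a b hab =>
    csInf_le hfinD.bddBelow ⟨a, b, hab, rfl⟩
  -- Part 1 uniqueness
  have part1u : ∀ x y u w : Y, x ≠ y → u ≠ w → d x y = m → d u w = m →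
      ({x, y} : Set Y) = {u, w} := by
    intro x y u w hxy huw h1 h2
    by_contra hne
    obtain ⟨hxu, hxw, hyu, hyw⟩ := unique_pair_aux hd h hxy huw (h1.trans h2.symm) hne
    have hdisj : Disjoint ({x, u} : Set Y) {y, w} := by
      rw [Set.disjoint_left]
      intro z hz hz'
      simp only [Set.mem_insert_iff, Set.mem_singleton_iff] at hz hz'
      rcases hz with rfl | rfl <;> rcases hz' with rfl | rfl <;>
        first
        | exact hxy rfl | exact hxw rfl | exact hyu rfl | exact hyw rfl
        | exact hxu rfl | exact huw rfl
    have hs : sDist d {x, u} {y, w} = m := by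
      apply sDist_eq
      · intro a ha b hb
        simp only [Set.mem_insert_iff, Set.mem_singleton_iff] at ha hb
        rcases ha with rfl | rfl <;> rcases hb with rfl | rfl
        · exact hlow _ _ hxy
        · exact hlow _ _ hxw
        · exact hlow _ _ (Ne.symm hyu)
        · exact hlow _ _ huw
      · exact ⟨x, Set.mem_insert _ _, y, Set.mem_insert _ _, h1⟩
    have := h {x, u} {y, w} hdisj (prox_of_finite d ⟨x, Set.mem_insert _ _⟩)
      (prox_of_finite d ⟨y, Set.mem_insert _ _⟩)
      x (Set.mem_insert _ _) y (Set.mem_insert _ _)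
      u (Set.mem_insert_of_mem _ rfl) w (Set.mem_insert_of_mem _ rfl)
      (by rw [hs, h1]) (by rw [hs, h2])
    exact hxu this.1
  -- second minimum setup
  have hD2ne : (DistSet d \ {m}).Nonempty := by
    have hneq : d p0 p1 ≠ d p0 p2 := ubpp_neq h hp01 hp02 hp12
    by_cases h01 : d p0 p1 = m
    · refine ⟨d p0 p2, ⟨p0, p2, hp02, rfl⟩, ?_⟩
      simp only [Set.mem_singleton_iff]
      rw [← h01]; exact fun hh => hneq hh.symm
    · exact ⟨d p0 p1, ⟨p0, p1, hp01, rfl⟩, by simpa using h01⟩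
  have hfinD2 : (DistSet d \ {m}).Finite := hfinD.subset Set.diff_subset
  set m2 := sInf (DistSet d \ {m}) with hm2d
  have hm2 : m2 ∈ DistSet d \ {m} := hD2ne.csInf_mem hfinD2
  have hlow2 : ∀ a b : Y, a ≠ b → d a b ≠ m → m2 ≤ d a b := fun a b hab hne' =>
    csInf_le hfinD2.bddBelow ⟨⟨a, b, hab, rfl⟩, by simpa using hne'⟩
  refine ⟨⟨?_, part1u⟩, ⟨?_, ?_⟩⟩
  · obtain ⟨x, y, hxy, hdm⟩ := hmD; exact ⟨x, y, hxy, hdm⟩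
  · obtain ⟨x, y, hxy, hdm⟩ := hm2.1; exact ⟨x, y, hxy, hdm⟩
  · -- Part 2 uniqueness
    intro x y u w hxy huw h1 h2
    by_contra hne
    obtain ⟨hxu, hxw, hyu, hyw⟩ := unique_pair_aux hd h hxy huw (h1.trans h2.symm) hne
    by_cases hcase : d x w = m ∨ d u y = m
    · -- use partition {x,w} | {y,u}
      have hxum : d x u ≠ m := by
        intro hm'
        rcases hcase with hc | hc
        · have hset := part1u x u x w hxu hxw hm' hc
          have hu : u ∈ ({x, w} : Set Y) := hset ▸ Set.mem_insert_of_mem _ rfl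
          simp only [Set.mem_insert_iff, Set.mem_singleton_iff] at hu
          rcases hu with rfl | rfl
          · exact hxu rfl
          · exact huw rfl
        · have hset := part1u x u u y hxu (Ne.symm hyu) hm' hc
          have hx : x ∈ ({u, y} : Set Y) := hset ▸ Set.mem_insert _ _
          simp only [Set.mem_insert_iff, Set.mem_singleton_iff] at hx
          rcases hx with rfl | rfl
          · exact hxu rfl
          · exact hxy rfl
      have hwym : d w y ≠ m := by
        intro hm'
        rcases hcase with hc | hc
        · have hset := part1u w y x w (Ne.symm hyw) hxw hm' hc
          have hy : y ∈ ({x, w} : Set Y) := hset ▸ Set.mem_insert_of_mem _ rfl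
          simp only [Set.mem_insert_iff, Set.mem_singleton_iff] at hy
          rcases hy with rfl | rfl
          · exact hxy rfl
          · exact hyw rfl
        · have hset := part1u w y u y (Ne.symm hyw) (Ne.symm hyu) hm' hc
          have hw : w ∈ ({u, y} : Set Y) := hset ▸ Set.mem_insert _ _
          simp only [Set.mem_insert_iff, Set.mem_singleton_iff] at hw
          rcases hw with rfl | rfl
          · exact huw rfl
          · exact hyw rfl
      have hdisj : Disjoint ({x, w} : Set Y) {y, u} := by
        rw [Set.disjoint_left]
        intro z hz hz'
        simp only [Set.mem_insert_iff, Set.mem_singleton_iff] at hz hz'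
        rcases hz with rfl | rfl <;> rcases hz' with rfl | rfl <;>
          first
          | exact hxy rfl | exact hxu rfl | exact hyw rfl | exact huw rfl
      have hs : sDist d {x, w} {y, u} = m2 := by
        apply sDist_eq
        · intro a ha b hb
          simp only [Set.mem_insert_iff, Set.mem_singleton_iff] at ha hb
          rcases ha with rfl | rfl <;> rcases hb with rfl | rfl
          · exact le_of_eq h1.symm
          · exact hlow2 _ _ hxu hxum
          · exact hlow2 _ _ (Ne.symm hyw) hwym
          · exact le_of_eq ((hsym _ _).trans h2).symm
        · exact ⟨x, Set.mem_insert _ _, y, Set.mem_insert _ _, h1⟩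
      have := h {x, w} {y, u} hdisj (prox_of_finite d ⟨x, Set.mem_insert _ _⟩)
        (prox_of_finite d ⟨y, Set.mem_insert _ _⟩)
        x (Set.mem_insert _ _) y (Set.mem_insert _ _)
        w (Set.mem_insert_of_mem _ rfl) u (Set.mem_insert_of_mem _ rfl)
        (by rw [hs, h1]) (by rw [hs]; exact (hsym w u).trans h2)
      exact hxw this.1
    · -- use partition {x,u} | {y,w}
      push_neg at hcase
      have hdisj : Disjoint ({x, u} : Set Y) {y, w} := by
        rw [Set.disjoint_left]
        intro z hz hz'
        simp only [Set.mem_insert_iff, Set.mem_singleton_iff] at hz hz'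
        rcases hz with rfl | rfl <;> rcases hz' with rfl | rfl <;>
          first
          | exact hxy rfl | exact hxw rfl | exact hyu rfl | exact hyw rfl
          | exact hxu rfl | exact huw rfl
      have hs : sDist d {x, u} {y, w} = m2 := by
        apply sDist_eq
        · intro a ha b hb
          simp only [Set.mem_insert_iff, Set.mem_singleton_iff] at ha hb
          rcases ha with rfl | rfl <;> rcases hb with rfl | rfl
          · exact le_of_eq h1.symm
          · exact hlow2 _ _ hxw hcase.1
          · exact hlow2 _ _ (Ne.symm hyu) hcase.2
          · exact le_of_eq h2.symm
        · exact ⟨x, Set.mem_insert _ _, y, Set.mem_insert _ _, h1⟩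
      have := h {x, u} {y, w} hdisj (prox_of_finite d ⟨x, Set.mem_insert _ _⟩)
        (prox_of_finite d ⟨y, Set.mem_insert _ _⟩)
        x (Set.mem_insert _ _) y (Set.mem_insert _ _)
        u (Set.mem_insert_of_mem _ rfl) w (Set.mem_insert_of_mem _ rfl)
        (by rw [hs, h1]) (by rw [hs, h2])
      exact hxu this.1
end

section
/- Let (Y,d) be a four-point weakly rigid semimetric space. Suppose that either all six pairwise distances between distinct points of Y are pairwise distinct, or D(Y) has exactly five elements d¹ < d² < d³ < d⁴ < d⁵ with exactly one value attained by exactly two unordered pairs of distinct points and this repeated value equal to d⁵ or to d⁴ (i.e., the digraph Di_Y is isomorphic to Di¹, Di² or Di³). Then (Y,d) belongs to the class UBPP. -/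
open Set

universe u v

/-- A four-point weakly rigid semimetric space whose digraph is isomorphic to
`Di¹`, `Di²` or `Di³` (all distances distinct, or exactly five values with the repeated value
being the largest or second largest) belongs to UBPP. -/
theorem stmt_12 {Y : Type u} (d : Y → Y → ℝ) (hd : IsSemimetric d)
    (hcard : Nat.card Y = 4) (hwr : WeaklyRigid d)
    (hdi : AllDistinct d ∨
      ((DistSet d).ncard = 5 ∧ ∃ c ∈ DistSet d,
        (PairsAt d c).ncard = 2 ∧
        (∀ r ∈ DistSet d, r ≠ c → (PairsAt d r).ncard = 1) ∧
        3 ≤ ({r ∈ DistSet d | r < c}).ncard)) :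
    UBPP d := by
  intro A B hAB hPA hPB a₁ ha₁ b₁ hb₁ a₂ ha₂ b₂ hb₂ h₁ h₂
  obtain ⟨hnn, hsymm, hzero⟩ := hd
  have hne : ∀ a ∈ A, ∀ b ∈ B, a ≠ b := fun a ha b hb h =>
    Set.disjoint_left.mp hAB ha (h ▸ hb)
  have hab₁ : a₁ ≠ b₁ := hne _ ha₁ _ hb₁
  have hab₂ : a₂ ≠ b₂ := hne _ ha₂ _ hb₂
  have ha₁b₂ : a₁ ≠ b₂ := hne _ ha₁ _ hb₂
  have ha₂b₁ : a₂ ≠ b₁ := hne _ ha₂ _ hb₁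
  have heq : d a₁ b₁ = d a₂ b₂ := h₁.trans h₂.symm
  have hble : ∀ a ∈ A, ∀ b ∈ B, sDist d A B ≤ d a b := fun a ha b hb =>
    csInf_le ⟨0, by rintro r ⟨x, -, y, -, rfl⟩; exact hnn x y⟩ ⟨a, ha, b, hb, rfl⟩
  have hsets : ({a₁, b₁} : Set Y) = {a₂, b₂} := by
    by_cases haa : a₁ = a₂
    · by_cases hbb : b₁ = b₂
      · rw [haa, hbb]
      · have h3 : ({a₁, b₁, b₂} : Set Y).encard = 3 := by
          rw [Set.encard_insert_of_notMem (by simp [hab₁, ha₁b₂]),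
            Set.encard_pair hbb]
          rfl
        exact hwr _ h3 a₁ (by simp) b₁ (by simp) a₂ (by simp [← haa]) b₂ (by simp)
          hab₁ heq
    · by_cases hbb : b₁ = b₂
      · have h3 : ({b₁, a₁, a₂} : Set Y).encard = 3 := by
          rw [Set.encard_insert_of_notMem
            (by simp [Ne.symm hab₁, Ne.symm ha₂b₁]), Set.encard_pair haa]
          rfl
        exact hwr _ h3 a₁ (by simp) b₁ (by simp) a₂ (by simp) b₂ (by simp [← hbb])
          hab₁ heq
      · -- all four points distinct; derive a contradiction from the distance counting
        exfalso
        have hp12 : ({a₁, b₁} : Set Y) ≠ {a₂, b₂} := by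
          intro h
          have : a₁ ∈ ({a₂, b₂} : Set Y) := h ▸ (by simp)
          simp only [Set.mem_insert_iff, Set.mem_singleton_iff] at this
          tauto
        rcases hdi with hall | ⟨h5, c₀, hc₀, hp2, hp1, h3lt⟩
        · exact hp12 (hall a₁ b₁ a₂ b₂ hab₁ hab₂ heq)
        · have hYfin : Finite Y := Nat.finite_of_card_ne_zero (by omega)
          set c := d a₁ b₁ with hc
          have hfin : (DistSet d).Finite :=
            Set.Finite.subset (Set.finite_range (fun p : Y × Y => d p.1 p.2))
              (by rintro r ⟨x, y, -, rfl⟩; exact ⟨(x, y), rfl⟩)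
          have hpfin : ∀ r : ℝ, (PairsAt d r).Finite := fun r =>
            Set.Finite.subset (Set.finite_range (fun p : Y × Y => ({p.1, p.2} : Set Y)))
              (by rintro s ⟨x, y, -, -, rfl⟩; exact ⟨(x, y), rfl⟩)
          have hcmem : c ∈ DistSet d := ⟨a₁, b₁, hab₁, rfl⟩
          have p11 : ({a₁, b₁} : Set Y) ∈ PairsAt d c := ⟨a₁, b₁, hab₁, rfl, rfl⟩
          have p22 : ({a₂, b₂} : Set Y) ∈ PairsAt d c := ⟨a₂, b₂, hab₂, heq.symm, rfl⟩
          have hcc : c = c₀ := by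
            by_contra hcc
            obtain ⟨s, hs⟩ := Set.ncard_eq_one.mp (hp1 c hcmem hcc)
            rw [hs] at p11 p22
            exact hp12 (p11.trans p22.symm)
          rw [← hcc] at hp2 h3lt hp1
          -- the two "cross" distances exceed c and are distinct
          have hle12 : c ≤ d a₁ b₂ := by rw [h₁]; exact hble _ ha₁ _ hb₂
          have hle21 : c ≤ d a₂ b₁ := by rw [h₁]; exact hble _ ha₂ _ hb₁
          have hnotc : ∀ x y : Y, x ≠ y → ({x, y} : Set Y) ≠ {a₁, b₁} →
              ({x, y} : Set Y) ≠ {a₂, b₂} → d x y ≠ c := by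
            intro x y hxy hne1 hne2 hdc
            have pxy : ({x, y} : Set Y) ∈ PairsAt d c := ⟨x, y, hxy, hdc, rfl⟩
            have h3le : 3 ≤ (PairsAt d c).ncard := by
              have hsub : ({({x, y}), ({a₁, b₁}), ({a₂, b₂})} : Set (Set Y)) ⊆
                  PairsAt d c := by
                rintro s (rfl | rfl | rfl) <;> assumption
              have h3 : ({({x, y}), ({a₁, b₁}), ({a₂, b₂})} : Set (Set Y)).ncard = 3 := by
                rw [Set.ncard_insert_of_notMem (by simp [hne1, hne2])
                  (Set.toFinite _), Set.ncard_pair hp12]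
              rw [← h3]
              exact Set.ncard_le_ncard hsub (hpfin c)
            omega
          have hd12 : d a₁ b₂ ≠ c := hnotc a₁ b₂ ha₁b₂
            (by intro h; have : b₂ ∈ ({a₁, b₁} : Set Y) := h ▸ (by simp)
                simp only [Set.mem_insert_iff, Set.mem_singleton_iff] at this; tauto)
            (by intro h; have : a₁ ∈ ({a₂, b₂} : Set Y) := h ▸ (by simp)
                simp only [Set.mem_insert_iff, Set.mem_singleton_iff] at this; tauto)
          have hd21 : d a₂ b₁ ≠ c := hnotc a₂ b₁ ha₂b₁
            (by intro h; have : a₂ ∈ ({a₁, b₁} : Set Y) := h ▸ (by simp)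
                simp only [Set.mem_insert_iff, Set.mem_singleton_iff] at this; tauto)
            (by intro h; have : b₁ ∈ ({a₂, b₂} : Set Y) := h ▸ (by simp)
                simp only [Set.mem_insert_iff, Set.mem_singleton_iff] at this; tauto)
          have hd1221 : d a₁ b₂ ≠ d a₂ b₁ := by
            intro h
            obtain ⟨s, hs⟩ := Set.ncard_eq_one.mp (hp1 (d a₁ b₂) ⟨a₁, b₂, ha₁b₂, rfl⟩ hd12)
            have q1 : ({a₁, b₂} : Set Y) ∈ PairsAt d (d a₁ b₂) := ⟨a₁, b₂, ha₁b₂, rfl, rfl⟩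
            have q2 : ({a₂, b₁} : Set Y) ∈ PairsAt d (d a₁ b₂) := ⟨a₂, b₁, ha₂b₁, h.symm, rfl⟩
            rw [hs] at q1 q2
            have : a₁ ∈ ({a₂, b₁} : Set Y) := (q1.trans q2.symm) ▸ (by simp)
            simp only [Set.mem_insert_iff, Set.mem_singleton_iff] at this
            tauto
          have hlt12 : c < d a₁ b₂ := lt_of_le_of_ne hle12 (Ne.symm hd12)
          have hlt21 : c < d a₂ b₁ := lt_of_le_of_ne hle21 (Ne.symm hd21)
          -- counting: at least 3 values below c and 3 values ≥ c in a 5-element set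
          set L := {r ∈ DistSet d | r < c} with hL
          have hLfin : L.Finite := hfin.subset (fun r hr => hr.1)
          have hT3 : ({c, d a₁ b₂, d a₂ b₁} : Set ℝ).ncard = 3 := by
            rw [Set.ncard_insert_of_notMem
              (by simp [Ne.symm hd12, Ne.symm hd21]) (Set.toFinite _),
              Set.ncard_pair hd1221]
          have hdisj : Disjoint L ({c, d a₁ b₂, d a₂ b₁} : Set ℝ) := by
            rw [Set.disjoint_left]
            rintro r ⟨-, hr⟩ (rfl | rfl | rfl) <;> linarith
          have hsub : L ∪ ({c, d a₁ b₂, d a₂ b₁} : Set ℝ) ⊆ DistSet d := by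
            rintro r (hr | rfl | rfl | rfl)
            · exact hr.1
            · exact hcmem
            · exact ⟨a₁, b₂, ha₁b₂, rfl⟩
            · exact ⟨a₂, b₁, ha₂b₁, rfl⟩
          have h6 : 6 ≤ (L ∪ ({c, d a₁ b₂, d a₂ b₁} : Set ℝ)).ncard := by
            rw [Set.ncard_union_eq hdisj hLfin (Set.toFinite _), hT3]
            omega
          have h5' := Set.ncard_le_ncard hsub hfin
          omega
  -- conclude from the set equality
  have hma : a₁ ∈ ({a₂, b₂} : Set Y) := hsets ▸ (show a₁ ∈ ({a₁, b₁} : Set Y) by simp)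
  have hmb : b₁ ∈ ({a₂, b₂} : Set Y) := hsets ▸ (show b₁ ∈ ({a₁, b₁} : Set Y) by simp)
  simp only [Set.mem_insert_iff, Set.mem_singleton_iff] at hma hmb
  constructor
  · tauto
  · rcases hmb with h | h
    · exact absurd h.symm ha₂b₁
    · exact h
end

section
/- Let (X,d) and (Y,ρ) be semimetric spaces and let Φ : X → Y be a weak similarity. Then, for every pair of disjoint proximinal subsets A,B of (X,d): the images Φ(A) and Φ(B) are disjoint proximinal subsets of (Y,ρ), and for all a ∈ A, b ∈ B one has d(a,b) = dist(A,B) if and only if ρ(Φ(a),Φ(b)) = dist(Φ(A),Φ(B)) (so the restriction of Φ to A ∪ B is an isomorphism of the proximinal graphs G_{X,d}(A,B) and G_{Y,ρ}(Φ(A),Φ(B))). In particular, (X,d) belongs to UBPP if and only if (Y,ρ) belongs to UBPP, and (X,d) is weakly rigid if and only if (Y,ρ) is weakly rigid. -/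
open Set

universe u v

section Helpers

variable {X : Type u} {Y : Type v}

lemma sm_pos {d : X → X → ℝ} (hd : IsSemimetric d) {x y : X} (h : x ≠ y) :
    0 < d x y :=
  lt_of_le_of_ne (hd.1 x y) fun h0 => h ((hd.2.2 x y).1 h0.symm)

lemma sm_zero {d : X → X → ℝ} (hd : IsSemimetric d) (x : X) : d x x = 0 :=
  (hd.2.2 x x).2 rfl

lemma mem_distSet {d : X → X → ℝ} {x y : X} (h : x ≠ y) : d x y ∈ DistSet d :=
  ⟨x, y, h, rfl⟩

/-- An attained lower bound characterization of `sInf`. -/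
lemma eq_csInf_iff {S : Set ℝ} {m : ℝ} (hbdd : BddBelow S) (hm : m ∈ S) :
    m = sInf S ↔ ∀ s ∈ S, m ≤ s := by
  constructor
  · intro h s hs; rw [h]; exact csInf_le hbdd hs
  · intro h; exact (IsLeast.csInf_eq ⟨hm, h⟩).symm

lemma prox_image {d : X → X → ℝ} {ρ : Y → Y → ℝ}
    (hd : IsSemimetric d) (hρ : IsSemimetric ρ) {Φ : X → Y}
    (hΦ : WeakSimilarity d ρ Φ) {A : Set X} (hA : Proximinal d A) :
    Proximinal ρ (Φ '' A) := by
  obtain ⟨⟨hinj, hsurj⟩, ψ, hbij, hmono, hψ⟩ := hΦ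
  intro y
  obtain ⟨x, rfl⟩ := hsurj y
  obtain ⟨a, haA, hda⟩ := hA x
  refine ⟨Φ a, ⟨a, haA, rfl⟩, ?_⟩
  have hbddX : BddBelow {r | ∃ a' ∈ A, d x a' = r} :=
    ⟨0, fun r ⟨a', _, hr⟩ => hr ▸ hd.1 x a'⟩
  rw [pDist]
  apply (eq_csInf_iff (S := {r | ∃ b ∈ Φ '' A, ρ (Φ x) b = r})
    ⟨0, fun r ⟨b, _, hr⟩ => hr ▸ hρ.1 _ b⟩ ⟨Φ a, ⟨a, haA, rfl⟩, rfl⟩).mpr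
  rintro s ⟨b, ⟨a', ha', rfl⟩, rfl⟩
  by_cases hxa : x = a
  · subst hxa; rw [sm_zero hρ]; exact hρ.1 _ _
  · have hxa' : x ≠ a' := by
      rintro rfl
      have h1 : pDist d x A ≤ 0 := by
        have := csInf_le hbddX ⟨x, ha', sm_zero hd x⟩
        simpa [pDist] using this
      have h2 : (0:ℝ) < d x a := sm_pos hd hxa
      rw [hda] at h2; linarith
    by_contra hlt
    push_neg at hlt
    have := hmono (mem_distSet (fun h => hxa' (hinj h)))
      (mem_distSet (fun h => hxa (hinj h))) hlt
    rw [← hψ x a' hxa', ← hψ x a hxa, hda] at this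
    have : pDist d x A ≤ d x a' := csInf_le hbddX ⟨a', ha', rfl⟩
    rw [← hda] at this
    have := hmono (mem_distSet (fun h => hxa' (hinj h)))
      (mem_distSet (fun h => hxa (hinj h))) hlt
    rw [← hψ x a' hxa', ← hψ x a hxa] at this
    linarith

lemma key_lemma {d : X → X → ℝ} {ρ : Y → Y → ℝ}
    (hd : IsSemimetric d) (hρ : IsSemimetric ρ) {Φ : X → Y}
    (hΦ : WeakSimilarity d ρ Φ) (A B : Set X) (hdis : Disjoint A B)
    (hA : Proximinal d A) (hB : Proximinal d B) :
    Disjoint (Φ '' A) (Φ '' B) ∧ Proximinal ρ (Φ '' A) ∧ Proximinal ρ (Φ '' B) ∧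
      ∀ a ∈ A, ∀ b ∈ B,
        (d a b = sDist d A B ↔ ρ (Φ a) (Φ b) = sDist ρ (Φ '' A) (Φ '' B)) := by
  obtain ⟨⟨hinj, hsurj⟩, ψ, hbij, hmono, hψ⟩ := hΦ
  have hΦ' : WeakSimilarity d ρ Φ := ⟨⟨hinj, hsurj⟩, ψ, hbij, hmono, hψ⟩
  refine ⟨(Set.disjoint_image_iff hinj).mpr hdis, prox_image hd hρ hΦ' hA,
    prox_image hd hρ hΦ' hB, ?_⟩
  intro a ha b hb
  have hne : ∀ a' ∈ A, ∀ b' ∈ B, a' ≠ b' := fun a' ha' b' hb' h =>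
    Set.disjoint_left.mp hdis ha' (h ▸ hb')
  have hbddX : BddBelow {r | ∃ a' ∈ A, ∃ b' ∈ B, d a' b' = r} :=
    ⟨0, fun r ⟨a', _, b', _, hr⟩ => hr ▸ hd.1 a' b'⟩
  have hbddY : BddBelow {r | ∃ u ∈ Φ '' A, ∃ v ∈ Φ '' B, ρ u v = r} :=
    ⟨0, fun r ⟨u, _, v, _, hr⟩ => hr ▸ hρ.1 u v⟩
  rw [sDist, sDist, eq_csInf_iff hbddX ⟨a, ha, b, hb, rfl⟩,
    eq_csInf_iff hbddY ⟨Φ a, ⟨a, ha, rfl⟩, Φ b, ⟨b, hb, rfl⟩, rfl⟩]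
  constructor
  · rintro h s ⟨u, ⟨a', ha', rfl⟩, v, ⟨b', hb', rfl⟩, rfl⟩
    have h1 := h (d a' b') ⟨a', ha', b', hb', rfl⟩
    rw [hψ a b (hne a ha b hb), hψ a' b' (hne a' ha' b' hb')] at h1
    exact (hmono.le_iff_le (mem_distSet (fun h => hne a ha b hb (hinj h)))
      (mem_distSet (fun h => hne a' ha' b' hb' (hinj h)))).mp h1
  · rintro h s ⟨a', ha', b', hb', rfl⟩
    have h1 := h (ρ (Φ a') (Φ b')) ⟨Φ a', ⟨a', ha', rfl⟩, Φ b', ⟨b', hb', rfl⟩, rfl⟩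
    rw [hψ a b (hne a ha b hb), hψ a' b' (hne a' ha' b' hb')]
    exact (hmono.le_iff_le (mem_distSet (fun h => hne a ha b hb (hinj h)))
      (mem_distSet (fun h => hne a' ha' b' hb' (hinj h)))).mpr h1

lemma inv_sim {d : X → X → ℝ} {ρ : Y → Y → ℝ} {Φ : X → Y}
    (hΦ : WeakSimilarity d ρ Φ) :
    ∃ Φ' : Y → X, WeakSimilarity ρ d Φ' ∧ (∀ x, Φ' (Φ x) = x) ∧ (∀ y, Φ (Φ' y) = y) := by
  obtain ⟨hbijΦ, ψ, hbij, hmono, hψ⟩ := hΦ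
  let e := Equiv.ofBijective Φ hbijΦ
  refine ⟨e.symm, ⟨e.symm.bijective, Function.invFunOn ψ (DistSet ρ), ?_, ?_, ?_⟩,
    fun x => e.symm_apply_apply x, fun y => e.apply_symm_apply y⟩
  · exact Set.BijOn.symm hbij.invOn_invFunOn.symm hbij
  · intro r hr s hs hrs
    obtain ⟨r', hr', rfl⟩ := hbij.surjOn hr
    obtain ⟨s', hs', rfl⟩ := hbij.surjOn hs
    rw [hbij.injOn.leftInvOn_invFunOn hr', hbij.injOn.leftInvOn_invFunOn hs']
    by_contra hle
    push_neg at hle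
    rcases eq_or_lt_of_le hle with h | h
    · exact absurd (h ▸ rfl) (ne_of_lt hrs)
    · exact absurd (hmono hs' hr' h) (not_lt_of_gt hrs)
  · intro y z hyz
    have hne : e.symm y ≠ e.symm z := fun h => hyz (e.symm.injective h)
    have := hψ (e.symm y) (e.symm z) hne
    simp only [e, Equiv.ofBijective_apply_symm_apply] at this
    rw [this, hbij.injOn.leftInvOn_invFunOn (mem_distSet hyz)]

lemma ubpp_of {d : X → X → ℝ} {ρ : Y → Y → ℝ}
    (hd : IsSemimetric d) (hρ : IsSemimetric ρ) {Φ : X → Y}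
    (hΦ : WeakSimilarity d ρ Φ) (h : UBPP ρ) : UBPP d := by
  intro A B hdis hA hB a₁ ha₁ b₁ hb₁ a₂ ha₂ b₂ hb₂ h1 h2
  obtain ⟨hdis', hPA, hPB, hiff⟩ := key_lemma hd hρ hΦ A B hdis hA hB
  have := h (Φ '' A) (Φ '' B) hdis' hPA hPB (Φ a₁) ⟨a₁, ha₁, rfl⟩ (Φ b₁) ⟨b₁, hb₁, rfl⟩
    (Φ a₂) ⟨a₂, ha₂, rfl⟩ (Φ b₂) ⟨b₂, hb₂, rfl⟩
    ((hiff a₁ ha₁ b₁ hb₁).mp h1) ((hiff a₂ ha₂ b₂ hb₂).mp h2)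
  exact ⟨hΦ.1.1 this.1, hΦ.1.1 this.2⟩

lemma wr_of {d : X → X → ℝ} {ρ : Y → Y → ℝ}
    (hd : IsSemimetric d) (hρ : IsSemimetric ρ) {Φ : X → Y}
    (hΦ : WeakSimilarity d ρ Φ) (h : WeaklyRigid d) : WeaklyRigid ρ := by
  obtain ⟨hbijΦ, ψ, hbij, hmono, hψ⟩ := hΦ
  let e := Equiv.ofBijective Φ hbijΦ
  intro S hS x hx y hy u hu v hv hxy hρeq
  have huv : u ≠ v := by
    rintro rfl
    rw [sm_zero hρ] at hρeq
    exact hxy ((hρ.2.2 x y).1 hρeq)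
  have hS' : (e.symm '' S).encard = 3 := by
    rw [Set.InjOn.encard_image e.symm.injective.injOn, hS]
  have hmem : ∀ w ∈ S, e.symm w ∈ e.symm '' S := fun w hw => ⟨w, hw, rfl⟩
  have hdeq : d (e.symm x) (e.symm y) = d (e.symm u) (e.symm v) := by
    rw [hψ _ _ (fun hh => hxy (e.symm.injective hh)),
      hψ _ _ (fun hh => huv (e.symm.injective hh))]
    simp only [e, Equiv.ofBijective_apply_symm_apply, hρeq]
  have := h (e.symm '' S) hS' (e.symm x) (hmem x hx) (e.symm y) (hmem y hy)
    (e.symm u) (hmem u hu) (e.symm v) (hmem v hv)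
    (fun hh => hxy (e.symm.injective hh)) hdeq
  have himg := congrArg (fun s => e '' s) this
  simp only [Set.image_pair] at himg
  simpa only [e.apply_symm_apply] using himg

end Helpers

/-- A weak similarity carries disjoint proximinal pairs to disjoint proximinal
pairs, induces an isomorphism of proximinal graphs, and preserves membership in UBPP and
weak rigidity. -/
theorem stmt_13 {X : Type u} {Y : Type v} (d : X → X → ℝ) (ρ : Y → Y → ℝ)
    (hd : IsSemimetric d) (hρ : IsSemimetric ρ)
    (Φ : X → Y) (hΦ : WeakSimilarity d ρ Φ) :
    (∀ A B : Set X, Disjoint A B → Proximinal d A → Proximinal d B →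
      Disjoint (Φ '' A) (Φ '' B) ∧ Proximinal ρ (Φ '' A) ∧ Proximinal ρ (Φ '' B) ∧
      ∀ a ∈ A, ∀ b ∈ B,
        (d a b = sDist d A B ↔ ρ (Φ a) (Φ b) = sDist ρ (Φ '' A) (Φ '' B))) ∧
    (UBPP d ↔ UBPP ρ) ∧ (WeaklyRigid d ↔ WeaklyRigid ρ) := by
  obtain ⟨Φ', hΦ', hli, hri⟩ := inv_sim hΦ
  refine ⟨fun A B hdis hA hB => key_lemma hd hρ hΦ A B hdis hA hB,
    ⟨fun h => ubpp_of hρ hd hΦ' h, fun h => ubpp_of hd hρ hΦ h⟩,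
    ⟨fun h => wr_of hd hρ hΦ h, fun h => wr_of hρ hd hΦ' h⟩⟩
end

section
/- The four-point semimetric space (X*,ρ*), where X* = {a₁, a₂, b₁, b₂} and ρ*(a₁,b₂) = 1, ρ*(a₂,b₁) = 2, ρ*(a₁,b₁) = ρ*(a₂,b₂) = 3, ρ*(b₁,b₂) = 4, ρ*(a₁,a₂) = 5, is weakly rigid but does not belong to the class UBPP. -/
open Set

universe u v

def Mz : Fin 4 → Fin 4 → ℤ := fun i j =>
  !![(0 : ℤ), 5, 3, 1; 5, 0, 2, 3; 3, 2, 0, 4; 1, 3, 4, 0] i j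

lemma rho_eq (i j : Fin 4) : rhoStar i j = (Mz i j : ℝ) := by
  fin_cases i <;> fin_cases j <;> norm_num [rhoStar, Mz]

lemma Mz_nonneg : ∀ i j, 0 ≤ Mz i j := by decide
lemma Mz_symm : ∀ i j, Mz i j = Mz j i := by decide
lemma Mz_zero : ∀ i j, Mz i j = 0 ↔ i = j := by decide

lemma key : ∀ x y u v : Fin 4, x ≠ y → Mz x y = Mz u v →
    ((x = u ∧ y = v) ∨ (x = v ∧ y = u)) ∨
    (x ≠ u ∧ x ≠ v ∧ y ≠ u ∧ y ≠ v ∧ u ≠ v) := by decide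

lemma pDist_pair {X : Type u} (d : X → X → ℝ) (x p q : X) :
    pDist d x {p, q} = min (d x p) (d x q) := by
  have h : {r | ∃ a ∈ ({p, q} : Set X), d x a = r} = {d x p, d x q} := by
    ext r
    simp only [Set.mem_setOf_eq, Set.mem_insert_iff, Set.mem_singleton_iff]
    constructor
    · rintro ⟨a, (rfl | rfl), rfl⟩ <;> simp
    · rintro (rfl | rfl)
      exacts [⟨p, Or.inl rfl, rfl⟩, ⟨q, Or.inr rfl, rfl⟩]
  rw [pDist, h, csInf_pair]

lemma prox_pair (p q : Fin 4) : Proximinal rhoStar {p, q} := by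
  intro x
  rw [pDist_pair]
  rcases le_total (rhoStar x p) (rhoStar x q) with h | h
  · exact ⟨p, Or.inl rfl, (min_eq_left h).symm⟩
  · exact ⟨q, Or.inr rfl, (min_eq_right h).symm⟩

lemma sDist_eq_s14 : sDist rhoStar ({0, 3} : Set (Fin 4)) ({1, 2} : Set (Fin 4)) = 3 := by
  have mem3 : (3 : ℝ) ∈ {r | ∃ a ∈ ({0, 3} : Set (Fin 4)), ∃ b ∈ ({1, 2} : Set (Fin 4)),
      rhoStar a b = r} :=
    ⟨0, Or.inl rfl, 2, Or.inr rfl, by norm_num [rhoStar, Matrix.cons_val_two, Matrix.cons_val_three]⟩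
  have lb : ∀ r ∈ {r | ∃ a ∈ ({0, 3} : Set (Fin 4)), ∃ b ∈ ({1, 2} : Set (Fin 4)),
      rhoStar a b = r}, (3 : ℝ) ≤ r := by
    rintro r ⟨a, (rfl | rfl), b, (rfl | rfl), rfl⟩ <;> norm_num [rhoStar, Matrix.cons_val_two, Matrix.cons_val_three]
  exact le_antisymm (csInf_le ⟨3, lb⟩ mem3) (le_csInf ⟨3, mem3⟩ lb)

/-- The four-point space `(X*, ρ*)` is a semimetric space which is weakly rigid
but does not belong to UBPP. -/
theorem stmt_14 : IsSemimetric rhoStar ∧ WeaklyRigid rhoStar ∧ ¬ UBPP rhoStar := by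
  refine ⟨⟨fun x y => ?_, fun x y => ?_, fun x y => ?_⟩, ?_, ?_⟩
  · rw [rho_eq]; exact_mod_cast Mz_nonneg x y
  · rw [rho_eq, rho_eq]; exact_mod_cast Mz_symm x y
  · rw [rho_eq]; exact_mod_cast Mz_zero x y
  · -- weakly rigid
    intro S hS x hx y hy u hu v hv hxy hd
    rw [rho_eq, rho_eq] at hd
    have hM : Mz x y = Mz u v := by exact_mod_cast hd
    rcases key x y u v hxy hM with (⟨rfl, rfl⟩ | ⟨rfl, rfl⟩) | ⟨h1, h2, h3, h4, h5⟩
    · rfl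
    · exact Set.pair_comm x y
    · exfalso
      have hsub : ({x, y, u, v} : Set (Fin 4)) ⊆ S := by
        intro z hz
        simp only [Set.mem_insert_iff, Set.mem_singleton_iff] at hz
        rcases hz with rfl | rfl | rfl | rfl <;> assumption
      have hcard : ({x, y, u, v} : Set (Fin 4)).encard = 4 := by
        rw [Set.encard_insert_of_notMem (by
          simp only [Set.mem_insert_iff, Set.mem_singleton_iff]
          push_neg; exact ⟨hxy, h1, h2⟩),
          Set.encard_insert_of_notMem (by
          simp only [Set.mem_insert_iff, Set.mem_singleton_iff]
          push_neg; exact ⟨h3, h4⟩),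
          Set.encard_pair h5]
        rfl
      have hle := Set.encard_mono hsub
      rw [hcard, hS] at hle
      exact absurd hle (by decide)
  · -- not UBPP
    intro hU
    have hdisj : Disjoint ({0, 3} : Set (Fin 4)) ({1, 2} : Set (Fin 4)) := by
      rw [Set.disjoint_left]
      rintro a (rfl | rfl) <;> simp
    have h1 : rhoStar 0 2 = sDist rhoStar ({0, 3} : Set (Fin 4)) ({1, 2} : Set (Fin 4)) := by
      rw [sDist_eq_s14]; norm_num [rhoStar, Matrix.cons_val_two, Matrix.cons_val_three]
    have h2 : rhoStar 3 1 = sDist rhoStar ({0, 3} : Set (Fin 4)) ({1, 2} : Set (Fin 4)) := by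
      rw [sDist_eq_s14]; norm_num [rhoStar, Matrix.cons_val_two, Matrix.cons_val_three]
    have := hU {0, 3} {1, 2} hdisj (prox_pair 0 3) (prox_pair 1 2)
      0 (Or.inl rfl) 2 (Or.inr rfl) 3 (Or.inr rfl) 1 (Or.inl rfl) h1 h2
    exact absurd this.1 (by decide)
end

section
/- Let (Y,d) be a four-point weakly rigid semimetric space such that D(Y) has exactly five elements d¹ < d² < d³ < d⁴ < d⁵, the middle value d³ is attained by exactly two unordered pairs of distinct points of Y, and each of the other four values is attained by exactly one such pair (i.e., the digraph Di_Y is isomorphic to the digraph Di⁴). Then (Y,d) belongs to the class UBPP if and only if (Y,d) is not weakly similar to the semimetric space (X*,ρ*). -/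
open Set

universe u v

section Aux

variable {Y : Type u}

lemma pair_ne_left {a b u v : Y} (h1 : a ≠ u) (h2 : a ≠ v) :
    ({a, b} : Set Y) ≠ {u, v} := by
  intro h
  have : a ∈ ({u, v} : Set Y) := h ▸ (by simp)
  simp only [Set.mem_insert_iff, Set.mem_singleton_iff] at this
  tauto

lemma pair_ne_right {a b u v : Y} (h1 : b ≠ u) (h2 : b ≠ v) :
    ({a, b} : Set Y) ≠ {u, v} := by
  intro h
  have : b ∈ ({u, v} : Set Y) := h ▸ (by simp)
  simp only [Set.mem_insert_iff, Set.mem_singleton_iff] at this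
  tauto

lemma prox_nonempty [Finite Y] (d : Y → Y → ℝ) {A : Set Y} (hA : A.Nonempty) :
    Proximinal d A := by
  intro x
  obtain ⟨a, ha, hmin⟩ := Set.exists_min_image A (fun a => d x a) A.toFinite hA
  refine ⟨a, ha, ?_⟩
  have himg : {r | ∃ a ∈ A, d x a = r} = (fun a => d x a) '' A := by
    ext r; simp [Set.mem_image]
  have hfin : {r | ∃ a ∈ A, d x a = r}.Finite := by
    rw [himg]; exact A.toFinite.image _
  apply le_antisymm
  · exact le_csInf ⟨d x a, a, ha, rfl⟩ (by rintro r ⟨b, hb, rfl⟩; exact hmin b hb)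
  · exact csInf_le hfin.bddBelow ⟨a, ha, rfl⟩

lemma sDist_le (d : Y → Y → ℝ) (h0 : ∀ x y, 0 ≤ d x y) {A B : Set Y} {a b : Y}
    (ha : a ∈ A) (hb : b ∈ B) : sDist d A B ≤ d a b := by
  refine csInf_le ⟨0, ?_⟩ ⟨a, ha, b, hb, rfl⟩
  rintro r ⟨u, -, v, -, rfl⟩; exact h0 u v

lemma notUBPP [Finite Y] (d : Y → Y → ℝ) (h0 : ∀ x y, 0 ≤ d x y)
    (A1 A2 B1 B2 : Y) (hA : A1 ≠ A2)
    (h1 : A1 ≠ B1) (h2 : A1 ≠ B2) (h3 : A2 ≠ B1) (h4 : A2 ≠ B2)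
    (c : ℝ) (e11 : d A1 B1 = c) (e22 : d A2 B2 = c)
    (e12 : c ≤ d A1 B2) (e21 : c ≤ d A2 B1) : ¬ UBPP d := by
  intro h
  have hdisj : Disjoint ({A1, A2} : Set Y) {B1, B2} := by
    rw [Set.disjoint_left]
    rintro x (rfl | rfl) hx <;> simp only [Set.mem_insert_iff, Set.mem_singleton_iff] at hx <;>
      tauto
  have hs : sDist d {A1, A2} {B1, B2} = c := by
    apply le_antisymm
    · calc sDist d {A1, A2} {B1, B2} ≤ d A1 B1 := sDist_le d h0 (by simp) (by simp)
        _ = c := e11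
    · refine le_csInf ⟨c, A1, by simp, B1, by simp, e11⟩ ?_
      rintro r ⟨u, hu, v, hv, rfl⟩
      simp only [Set.mem_insert_iff, Set.mem_singleton_iff] at hu hv
      rcases hu with rfl | rfl <;> rcases hv with rfl | rfl
      exacts [e11.ge, e12, e21, e22.ge]
  obtain ⟨h12, -⟩ := h {A1, A2} {B1, B2} hdisj (prox_nonempty d ⟨A1, by simp⟩)
    (prox_nonempty d ⟨B1, by simp⟩) A1 (by simp) B1 (by simp) A2 (by simp) B2 (by simp)
    (e11.trans hs.symm) (e22.trans hs.symm)
  exact hA h12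

lemma distSet_rhoStar : DistSet rhoStar = {1, 2, 3, 4, 5} := by
  ext r
  constructor
  · rintro ⟨i, j, hij, rfl⟩
    fin_cases i <;> fin_cases j <;> simp_all [rhoStar]
  · intro hr
    simp only [Set.mem_insert_iff, Set.mem_singleton_iff] at hr
    rcases hr with rfl | rfl | rfl | rfl | rfl
    · exact ⟨0, 3, by decide, by simp [rhoStar]⟩
    · exact ⟨1, 2, by decide, by simp [rhoStar]⟩
    · exact ⟨0, 2, by decide, by simp [rhoStar]⟩
    · exact ⟨2, 3, by decide, by simp [rhoStar]⟩
    · exact ⟨0, 1, by decide, by norm_num [rhoStar]⟩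

set_option maxHeartbeats 1000000 in
lemma rhoStar_big {i j : Fin 4} (h : rhoStar i j = 4 ∨ rhoStar i j = 5) :
    (i = 2 ∧ j = 3) ∨ (i = 3 ∧ j = 2) ∨ (i = 0 ∧ j = 1) ∨ (i = 1 ∧ j = 0) := by
  fin_cases i <;> fin_cases j <;> norm_num [rhoStar] at h <;> decide

lemma psi_sorted {ψ : ℝ → ℝ} {v1 v2 v3 v4 v5 : ℝ}
    (h12 : v1 < v2) (h23 : v2 < v3) (h34 : v3 < v4) (h45 : v4 < v5)
    (hbij : Set.BijOn ψ {1, 2, 3, 4, 5} {v1, v2, v3, v4, v5})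
    (hmono : StrictMonoOn ψ ({1, 2, 3, 4, 5} : Set ℝ)) :
    ψ 1 = v1 ∧ ψ 2 = v2 ∧ ψ 3 = v3 ∧ ψ 4 = v4 ∧ ψ 5 = v5 := by
  have m1 : (1 : ℝ) ∈ ({1, 2, 3, 4, 5} : Set ℝ) := by norm_num
  have m2 : (2 : ℝ) ∈ ({1, 2, 3, 4, 5} : Set ℝ) := by norm_num
  have m3 : (3 : ℝ) ∈ ({1, 2, 3, 4, 5} : Set ℝ) := by norm_num
  have m4 : (4 : ℝ) ∈ ({1, 2, 3, 4, 5} : Set ℝ) := by norm_num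
  have m5 : (5 : ℝ) ∈ ({1, 2, 3, 4, 5} : Set ℝ) := by norm_num
  have w1 := hbij.mapsTo m1
  have w2 := hbij.mapsTo m2
  have w3 := hbij.mapsTo m3
  have w4 := hbij.mapsTo m4
  have w5 := hbij.mapsTo m5
  simp only [Set.mem_insert_iff, Set.mem_singleton_iff] at w1 w2 w3 w4 w5
  have p12 : ψ 1 < ψ 2 := hmono m1 m2 (by norm_num)
  have p23 : ψ 2 < ψ 3 := hmono m2 m3 (by norm_num)
  have p34 : ψ 3 < ψ 4 := hmono m3 m4 (by norm_num)
  have p45 : ψ 4 < ψ 5 := hmono m4 m5 (by norm_num)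
  have e1 : ψ 1 = v1 := by
    obtain ⟨t, ht, hψt⟩ := hbij.surjOn (show v1 ∈ ({v1, v2, v3, v4, v5} : Set ℝ) by simp)
    have hle : ψ 1 ≤ ψ t := by
      simp only [Set.mem_insert_iff, Set.mem_singleton_iff] at ht
      rcases ht with rfl | rfl | rfl | rfl | rfl
      · exact le_refl _
      all_goals exact (hmono m1 (by norm_num) (by norm_num)).le
    rw [hψt] at hle
    rcases w1 with h | h | h | h | h <;> linarith
  have e5 : ψ 5 = v5 := by
    obtain ⟨t, ht, hψt⟩ := hbij.surjOn (show v5 ∈ ({v1, v2, v3, v4, v5} : Set ℝ) by simp)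
    have hle : ψ t ≤ ψ 5 := by
      simp only [Set.mem_insert_iff, Set.mem_singleton_iff] at ht
      rcases ht with rfl | rfl | rfl | rfl | rfl
      · exact (hmono m1 m5 (by norm_num)).le
      · exact (hmono m2 m5 (by norm_num)).le
      · exact (hmono m3 m5 (by norm_num)).le
      · exact (hmono m4 m5 (by norm_num)).le
      · exact le_refl _
    rw [hψt] at hle
    rcases w5 with h | h | h | h | h <;> linarith
  have b2 : v2 ≤ ψ 2 := by rcases w2 with h | h | h | h | h <;> linarith
  have b4 : ψ 4 ≤ v4 := by rcases w4 with h | h | h | h | h <;> linarith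
  have e3 : ψ 3 = v3 := by rcases w3 with h | h | h | h | h <;> linarith
  have e2 : ψ 2 = v2 := by rcases w2 with h | h | h | h | h <;> linarith
  have e4 : ψ 4 = v4 := by rcases w4 with h | h | h | h | h <;> linarith
  exact ⟨e1, e2, e3, e4, e5⟩

lemma nosim (d : Y → Y → ℝ) {v1 v2 v3 v4 v5 : ℝ}
    (h12 : v1 < v2) (h23 : v2 < v3) (h34 : v3 < v4) (h45 : v4 < v5)
    (hset : DistSet d = {v1, v2, v3, v4, v5})
    (u m w : Y) (huw : u ≠ w) (hum : u ≠ m) (hmw : m ≠ w)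
    (hb1 : v3 < d u m) (hb2 : v3 < d m w) :
    ¬ ∃ Φ : Y → Fin 4, WeakSimilarity d rhoStar Φ := by
  rintro ⟨Φ, hΦ, ψ, hbij, hmono, heqd⟩
  rw [distSet_rhoStar] at hbij hmono
  rw [hset] at hbij
  obtain ⟨p1, p2, p3, p4, p5⟩ := psi_sorted h12 h23 h34 h45 hbij hmono
  have key : ∀ a b : Y, a ≠ b → v3 < d a b →
      (Φ a = 2 ∧ Φ b = 3) ∨ (Φ a = 3 ∧ Φ b = 2) ∨ (Φ a = 0 ∧ Φ b = 1) ∨ (Φ a = 1 ∧ Φ b = 0) := by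
    intro a b hab hlt
    have hne : Φ a ≠ Φ b := fun h => hab (hΦ.1 h)
    have hmem : rhoStar (Φ a) (Φ b) ∈ DistSet rhoStar := ⟨_, _, hne, rfl⟩
    rw [distSet_rhoStar] at hmem
    simp only [Set.mem_insert_iff, Set.mem_singleton_iff] at hmem
    have hde := heqd a b hab
    apply rhoStar_big
    rcases hmem with h | h | h | h | h <;> rw [h] at hde ⊢
    · rw [p1] at hde; linarith
    · rw [p2] at hde; linarith
    · rw [p3] at hde; linarith
    · exact Or.inl rfl
    · exact Or.inr rfl
  have k1 := key u m hum hb1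
  have k2 := key m w hmw hb2
  have hne : Φ u ≠ Φ w := fun h => huw (hΦ.1 h)
  rcases k1 with ⟨g1, g2⟩ | ⟨g1, g2⟩ | ⟨g1, g2⟩ | ⟨g1, g2⟩ <;>
    rcases k2 with ⟨f1, f2⟩ | ⟨f1, f2⟩ | ⟨f1, f2⟩ | ⟨f1, f2⟩ <;> simp_all

set_option maxHeartbeats 2000000 in
lemma sim (d : Y → Y → ℝ) (hsym : ∀ x y, d x y = d y x)
    (A1 A2 B1 B2 : Y)
    (n12 : A1 ≠ A2) (n13 : A1 ≠ B1) (n14 : A1 ≠ B2)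
    (n23 : A2 ≠ B1) (n24 : A2 ≠ B2) (n34 : B1 ≠ B2)
    (huniv : ∀ z : Y, z = A1 ∨ z = A2 ∨ z = B1 ∨ z = B2)
    {v1 v2 v3 v4 v5 : ℝ}
    (o12 : v1 < v2) (o23 : v2 < v3) (o34 : v3 < v4) (o45 : v4 < v5)
    (e1 : d A1 B2 = v1) (e2 : d A2 B1 = v2) (e3 : d A1 B1 = v3) (e3' : d A2 B2 = v3)
    (e4 : d B1 B2 = v4) (e5 : d A1 A2 = v5)
    (hDS : DistSet d = {v1, v2, v3, v4, v5}) :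
    ∃ Φ : Y → Fin 4, WeakSimilarity d rhoStar Φ := by
  classical
  have n21 := n12.symm; have n31 := n13.symm; have n41 := n14.symm
  have n32 := n23.symm; have n42 := n24.symm; have n43 := n34.symm
  have f21 : d A2 A1 = v5 := (hsym A2 A1).trans e5
  have f31 : d B1 A1 = v3 := (hsym B1 A1).trans e3
  have f41 : d B2 A1 = v1 := (hsym B2 A1).trans e1
  have f32 : d B1 A2 = v2 := (hsym B1 A2).trans e2
  have f42 : d B2 A2 = v3 := (hsym B2 A2).trans e3'
  have f43 : d B2 B1 = v4 := (hsym B2 B1).trans e4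
  set ψ : ℝ → ℝ := fun t => if t = 1 then v1 else if t = 2 then v2 else if t = 3 then v3
      else if t = 4 then v4 else v5 with hψ
  have hmono : StrictMonoOn ψ ({1, 2, 3, 4, 5} : Set ℝ) := by
    intro a ha b hb hab
    simp only [Set.mem_insert_iff, Set.mem_singleton_iff] at ha hb
    rcases ha with rfl | rfl | rfl | rfl | rfl <;> rcases hb with rfl | rfl | rfl | rfl | rfl <;>
      simp only [hψ] <;> norm_num at hab <;> norm_num <;> linarith
  refine ⟨fun z => if z = A1 then 0 else if z = A2 then 1 else if z = B1 then 2 else 3,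
    ⟨?_, ?_⟩, ψ, ?_, ?_, ?_⟩
  · intro x y hxy
    rcases huniv x with rfl | rfl | rfl | rfl <;> rcases huniv y with rfl | rfl | rfl | rfl <;>
      simp_all
  · intro i
    fin_cases i
    · exact ⟨A1, by simp⟩
    · exact ⟨A2, by simp [n21]⟩
    · exact ⟨B1, by simp [n31, n32]⟩
    · exact ⟨B2, by simp [n41, n42, n43]⟩
  · rw [distSet_rhoStar, hDS]
    refine ⟨?_, hmono.injOn, ?_⟩
    · rintro t (rfl | rfl | rfl | rfl | rfl) <;> norm_num [hψ]
    · rintro w (rfl | rfl | rfl | rfl | rfl)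
      · exact ⟨1, by norm_num, by norm_num [hψ]⟩
      · exact ⟨2, by norm_num, by norm_num [hψ]⟩
      · exact ⟨3, by norm_num, by norm_num [hψ]⟩
      · exact ⟨4, by norm_num, by norm_num [hψ]⟩
      · exact ⟨5, by norm_num, by norm_num [hψ]⟩
  · rw [distSet_rhoStar]; exact hmono
  · intro x y hxy
    rcases huniv x with rfl | rfl | rfl | rfl <;> rcases huniv y with rfl | rfl | rfl | rfl <;>
      first
      | exact absurd rfl hxy
      | norm_num [hψ, rhoStar, Matrix.cons_val_two, Matrix.cons_val_three, Matrix.tail_cons, Matrix.head_cons, n12, n13, n14, n23, n24, n34, n21, n31, n41, n32, n42, n43,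
          e1, e2, e3, e3', e4, e5, f21, f31, f41, f32, f42, f43]

lemma ubpp_of_s15 (d : Y → Y → ℝ) (h0 : ∀ x y, 0 ≤ d x y) (hsym : ∀ x y, d x y = d y x)
    (c : ℝ) (x1 y1 x2 y2 : Y)
    (hcc : ∀ a b : Y, a ≠ b → d a b = c →
      ({a, b} : Set Y) = {x1, y1} ∨ ({a, b} : Set Y) = {x2, y2})
    (huq : ∀ a b u v : Y, a ≠ b → u ≠ v → d a b = d u v →
      d a b = c ∨ ({a, b} : Set Y) = {u, v})
    (hpc : d x1 x2 ≠ c) (hqc : d x2 y1 ≠ c) (hrc : d y1 y2 ≠ c) (hsc : d y2 x1 ≠ c)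
    (hpr : ¬ (c < d x1 x2 ∧ c < d y1 y2))
    (hqs : ¬ (c < d x2 y1 ∧ c < d y2 x1)) :
    UBPP d := by
  intro A B hAB hPA hPB a1 ha1 b1 hb1 a2 ha2 b2 hb2 hd1 hd2
  by_cases hfin : a1 = a2 ∧ b1 = b2
  · exact hfin
  exfalso
  have hne : ∀ a ∈ A, ∀ b ∈ B, a ≠ b := fun a ha b hb => hAB.ne_of_mem ha hb
  have h11 : a1 ≠ b1 := hne _ ha1 _ hb1
  have h22 : a2 ≠ b2 := hne _ ha2 _ hb2
  have h12 : a1 ≠ b2 := hne _ ha1 _ hb2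
  have h21 : a2 ≠ b1 := hne _ ha2 _ hb1
  have hdd : d a1 b1 = d a2 b2 := hd1.trans hd2.symm
  have hpair : ∀ u v : Y, ({a1, b1} : Set Y) = {u, v} → ({a2, b2} : Set Y) = {u, v} → False := by
    intro u v h h'
    rw [← h'] at h
    rw [Set.pair_eq_pair_iff] at h
    rcases h with ⟨rfl, rfl⟩ | ⟨rfl, rfl⟩
    · exact hfin ⟨rfl, rfl⟩
    · exact h12 rfl
  rcases huq a1 b1 a2 b2 h11 h22 hdd with hcv | hset
  swap
  · rw [Set.pair_eq_pair_iff] at hset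
    rcases hset with ⟨rfl, rfl⟩ | ⟨rfl, rfl⟩
    · exact hfin ⟨rfl, rfl⟩
    · exact h12 rfl
  have hcv2 : d a2 b2 = c := hdd.symm.trans hcv
  have hle1 : c ≤ d a1 b2 := by
    have := sDist_le d h0 ha1 hb2
    rw [← hd1, hcv] at this; exact this
  have hle2 : c ≤ d a2 b1 := by
    have := sDist_le d h0 ha2 hb1
    rw [← hd1, hcv] at this; exact this
  rcases hcc a1 b1 h11 hcv with h1 | h1 <;> rcases hcc a2 b2 h22 hcv2 with h2 | h2
  · exact hpair _ _ h1 h2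
  · rw [Set.pair_eq_pair_iff] at h1 h2
    obtain ⟨ea1, eb1⟩ | ⟨ea1, eb1⟩ := h1 <;> obtain ⟨ea2, eb2⟩ | ⟨ea2, eb2⟩ := h2 <;>
      simp only [← ea1, ← eb1, ← ea2, ← eb2] at hpr hqs hpc hqc hrc hsc <;>
      first
      | exact hqs ⟨hle2.lt_of_ne (Ne.symm hqc), ((hsym a1 b2) ▸ hle1).lt_of_ne (Ne.symm hsc)⟩
      | exact hpr ⟨hle1.lt_of_ne (Ne.symm hpc), ((hsym a2 b1) ▸ hle2).lt_of_ne (Ne.symm hrc)⟩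
      | exact hpr ⟨((hsym a2 b1) ▸ hle2).lt_of_ne (Ne.symm hpc), hle1.lt_of_ne (Ne.symm hrc)⟩
      | exact hqs ⟨((hsym a1 b2) ▸ hle1).lt_of_ne (Ne.symm hqc), hle2.lt_of_ne (Ne.symm hsc)⟩
      | exact hqs ⟨hle1.lt_of_ne (Ne.symm hqc), ((hsym a2 b1) ▸ hle2).lt_of_ne (Ne.symm hsc)⟩
      | exact hpr ⟨hle2.lt_of_ne (Ne.symm hpc), ((hsym a1 b2) ▸ hle1).lt_of_ne (Ne.symm hrc)⟩
      | exact hpr ⟨((hsym a1 b2) ▸ hle1).lt_of_ne (Ne.symm hpc), hle2.lt_of_ne (Ne.symm hrc)⟩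
      | exact hqs ⟨((hsym a2 b1) ▸ hle2).lt_of_ne (Ne.symm hqc), hle1.lt_of_ne (Ne.symm hsc)⟩
  · rw [Set.pair_eq_pair_iff] at h1 h2
    obtain ⟨ea1, eb1⟩ | ⟨ea1, eb1⟩ := h1 <;> obtain ⟨ea2, eb2⟩ | ⟨ea2, eb2⟩ := h2 <;>
      simp only [← ea1, ← eb1, ← ea2, ← eb2] at hpr hqs hpc hqc hrc hsc <;>
      first
      | exact hqs ⟨hle2.lt_of_ne (Ne.symm hqc), ((hsym a1 b2) ▸ hle1).lt_of_ne (Ne.symm hsc)⟩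
      | exact hpr ⟨hle1.lt_of_ne (Ne.symm hpc), ((hsym a2 b1) ▸ hle2).lt_of_ne (Ne.symm hrc)⟩
      | exact hpr ⟨((hsym a2 b1) ▸ hle2).lt_of_ne (Ne.symm hpc), hle1.lt_of_ne (Ne.symm hrc)⟩
      | exact hqs ⟨((hsym a1 b2) ▸ hle1).lt_of_ne (Ne.symm hqc), hle2.lt_of_ne (Ne.symm hsc)⟩
      | exact hqs ⟨hle1.lt_of_ne (Ne.symm hqc), ((hsym a2 b1) ▸ hle2).lt_of_ne (Ne.symm hsc)⟩
      | exact hpr ⟨hle2.lt_of_ne (Ne.symm hpc), ((hsym a1 b2) ▸ hle1).lt_of_ne (Ne.symm hrc)⟩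
      | exact hpr ⟨((hsym a1 b2) ▸ hle1).lt_of_ne (Ne.symm hpc), hle2.lt_of_ne (Ne.symm hrc)⟩
      | exact hqs ⟨((hsym a2 b1) ▸ hle2).lt_of_ne (Ne.symm hqc), hle1.lt_of_ne (Ne.symm hsc)⟩
  · exact hpair _ _ h1 h2

lemma nosim' (d : Y → Y → ℝ) {sa sb c ba bb : ℝ}
    (hsa : sa < c) (hsb : sb < c) (hba : c < ba) (hbb : c < bb)
    (hsne : sa ≠ sb) (hbne : ba ≠ bb)
    (hset : DistSet d = {sa, sb, c, ba, bb})
    (u m w : Y) (huw : u ≠ w) (hum : u ≠ m) (hmw : m ≠ w)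
    (hb1 : c < d u m) (hb2 : c < d m w) :
    ¬ ∃ Φ : Y → Fin 4, WeakSimilarity d rhoStar Φ := by
  rcases lt_or_gt_of_ne hsne with h1 | h1 <;> rcases lt_or_gt_of_ne hbne with h2 | h2
  · exact nosim d h1 hsb hba h2 hset u m w huw hum hmw hb1 hb2
  · refine nosim d h1 hsb hbb h2 ?_ u m w huw hum hmw hb1 hb2
    rw [hset]; ext x; simp only [Set.mem_insert_iff, Set.mem_singleton_iff]; tauto
  · refine nosim d h1 hsa hba h2 ?_ u m w huw hum hmw hb1 hb2
    rw [hset]; ext x; simp only [Set.mem_insert_iff, Set.mem_singleton_iff]; tauto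
  · refine nosim d h1 hsa hbb h2 ?_ u m w huw hum hmw hb1 hb2
    rw [hset]; ext x; simp only [Set.mem_insert_iff, Set.mem_singleton_iff]; tauto

end Aux

set_option maxHeartbeats 4000000 in
/-- A four-point weakly rigid semimetric space whose digraph is isomorphic to
`Di⁴` (exactly five distance values, the middle one attained by exactly two unordered pairs,
all the others by exactly one) belongs to UBPP iff it is not weakly similar to `(X*, ρ*)`. -/
theorem stmt_15 {Y : Type u} (d : Y → Y → ℝ) (hd : IsSemimetric d)
    (hcard : Nat.card Y = 4) (hwr : WeaklyRigid d)
    (hD : (DistSet d).ncard = 5) (c : ℝ) (hc : c ∈ DistSet d)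
    (hc2 : (PairsAt d c).ncard = 2)
    (hc1 : ∀ r ∈ DistSet d, r ≠ c → (PairsAt d r).ncard = 1)
    (hmid : ({r ∈ DistSet d | r < c}).ncard = 2) :
    UBPP d ↔ ¬ ∃ Φ : Y → Fin 4, WeakSimilarity d rhoStar Φ := by
  obtain ⟨h0, hsym, hzero⟩ := hd
  have hfinY : Finite Y := (Nat.card_pos_iff.mp (by omega)).2
  obtain ⟨S1, S2, hS12, hPc⟩ := Set.ncard_eq_two.mp hc2
  have hS1 : S1 ∈ PairsAt d c := by rw [hPc]; exact Set.mem_insert _ _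
  have hS2 : S2 ∈ PairsAt d c := by rw [hPc]; exact Set.mem_insert_of_mem _ rfl
  obtain ⟨x1, y1, hn11, g11, rfl⟩ := hS1
  obtain ⟨x2, y2, hn22, g22, rfl⟩ := hS2
  have tri : ∀ z u v : Y, z ≠ u → z ≠ v → u ≠ v → d z u = d z v → False := by
    intro z u v hzu hzv huv h
    have h3 : ({z, u, v} : Set Y).encard = 3 :=
      Set.encard_eq_three.mpr ⟨z, u, v, hzu, hzv, huv, rfl⟩
    have := hwr _ h3 z (by simp) u (by simp) z (by simp) v (by simp) hzu h
    rw [Set.pair_eq_pair_iff] at this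
    rcases this with ⟨-, h'⟩ | ⟨h', -⟩
    · exact huv h'
    · exact hzv h'
  have hx1x2 : x1 ≠ x2 := by
    intro h
    have hy : y1 ≠ y2 := fun h' => hS12 (by rw [h, h'])
    exact tri x1 y1 y2 hn11 (by rw [h]; exact hn22) hy (g11.trans (by rw [h]; exact g22.symm))
  have hx1y2 : x1 ≠ y2 := by
    intro h
    have hy : y1 ≠ x2 := fun h' => hS12 (by rw [Set.pair_comm x1 y1, h', h])
    refine tri x1 y1 x2 hn11 ?_ hy (g11.trans ?_)
    · intro h'; rw [h'] at h; exact hn22 h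
    · exact ((by rw [hsym x1 x2, h]; exact g22 : d x1 x2 = c)).symm
  have hy1x2 : y1 ≠ x2 := by
    intro h
    have hx : x1 ≠ y2 := fun h' => hS12 (by rw [Set.pair_comm x1 y1, h, h'])
    refine tri y1 x1 y2 (Ne.symm hn11) ?_ hx ?_
    · intro h'; rw [h] at h'; exact hn22 h'
    · exact ((hsym y1 x1).trans g11).trans (by rw [h]; exact g22.symm)
  have hy1y2 : y1 ≠ y2 := by
    intro h
    have hx : x1 ≠ x2 := fun h' => hS12 (by rw [h', h])
    refine tri y1 x1 x2 (Ne.symm hn11) ?_ hx ?_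
    · intro h'; rw [h'] at h; exact hn22 h
    · exact ((hsym y1 x1).trans g11).trans
        (by rw [h, hsym y2 x2]; exact g22.symm)
  have hcard4 : ({x1, y1, x2, y2} : Set Y).ncard = 4 := by
    rw [Set.ncard_insert_of_notMem (by simp [hn11, hx1x2, hx1y2]),
      Set.ncard_insert_of_notMem (by simp [hy1x2, hy1y2]), Set.ncard_pair hn22]
  have huniv : ∀ z : Y, z = x1 ∨ z = y1 ∨ z = x2 ∨ z = y2 := by
    intro z
    have hsub : ({x1, y1, x2, y2} : Set Y) = Set.univ :=
      Set.eq_of_subset_of_ncard_le (Set.subset_univ _)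
        (by rw [Set.ncard_univ, hcard, hcard4]) Set.finite_univ
    have : z ∈ ({x1, y1, x2, y2} : Set Y) := hsub ▸ Set.mem_univ z
    simpa using this
  have gs11 : d y1 x1 = c := (hsym y1 x1).trans g11
  have gs22 : d y2 x2 = c := (hsym y2 x2).trans g22
  have gps : d x2 x1 = d x1 x2 := hsym x2 x1
  have gqs : d y1 x2 = d x2 y1 := hsym y1 x2
  have grs : d y2 y1 = d y1 y2 := hsym y2 y1
  have gss : d x1 y2 = d y2 x1 := hsym x1 y2
  have hmem : ∀ a b : Y, a ≠ b → d a b = d x1 x2 ∨ d a b = d x2 y1 ∨ d a b = d y1 y2 ∨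
      d a b = d y2 x1 ∨ d a b = c := by
    intro a b hab
    rcases huniv a with rfl | rfl | rfl | rfl <;> rcases huniv b with rfl | rfl | rfl | rfl <;>
      first
      | exact absurd rfl hab
      | (simp only [gps, gqs, grs, gss, g11, gs11, g22, gs22]; tauto)
  have hDS : DistSet d = {d x1 x2, d x2 y1, d y1 y2, d y2 x1, c} := by
    apply Set.Subset.antisymm
    · rintro w ⟨a, b, hab, rfl⟩
      simp only [Set.mem_insert_iff, Set.mem_singleton_iff]
      exact hmem a b hab
    · rintro w (rfl | rfl | rfl | rfl | rfl)
      exacts [⟨x1, x2, hx1x2, rfl⟩, ⟨x2, y1, Ne.symm hy1x2, rfl⟩, ⟨y1, y2, hy1y2, rfl⟩,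
        ⟨y2, x1, Ne.symm hx1y2, rfl⟩, ⟨x1, y1, hn11, g11⟩]
  have hcc : ∀ a b : Y, a ≠ b → d a b = c →
      ({a, b} : Set Y) = {x1, y1} ∨ ({a, b} : Set Y) = {x2, y2} := by
    intro a b hab habc
    have hmem' : ({a, b} : Set Y) ∈ PairsAt d c := ⟨a, b, hab, habc, rfl⟩
    rw [hPc] at hmem'
    simpa using hmem'
  have huq : ∀ a b u v : Y, a ≠ b → u ≠ v → d a b = d u v →
      d a b = c ∨ ({a, b} : Set Y) = {u, v} := by
    intro a b u v hab huv h
    by_cases hc' : d a b = c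
    · exact Or.inl hc'
    right
    obtain ⟨T, hT⟩ := Set.ncard_eq_one.mp (hc1 _ ⟨a, b, hab, rfl⟩ hc')
    have h1 : ({a, b} : Set Y) ∈ PairsAt d (d a b) := ⟨a, b, hab, rfl, rfl⟩
    have h2 : ({u, v} : Set Y) ∈ PairsAt d (d a b) := ⟨u, v, huv, h.symm, rfl⟩
    rw [hT, Set.mem_singleton_iff] at h1 h2
    exact h1.trans h2.symm
  have keyc : ∀ a b : Y, a ≠ b → ({a, b} : Set Y) ≠ {x1, y1} →
      ({a, b} : Set Y) ≠ {x2, y2} → d a b ≠ c := by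
    intro a b hab h1 h2 hc'
    rcases hcc a b hab hc' with h | h
    exacts [h1 h, h2 h]
  have keyd : ∀ a b u v : Y, a ≠ b → u ≠ v → d a b ≠ c → ({a, b} : Set Y) ≠ {u, v} →
      d a b ≠ d u v := by
    intro a b u v hab huv hnc hne h
    rcases huq a b u v hab huv h with h' | h'
    exacts [hnc h', hne h']
  have hpc : d x1 x2 ≠ c :=
    keyc x1 x2 hx1x2 (pair_ne_right (Ne.symm hx1x2) (Ne.symm hy1x2))
      (pair_ne_left hx1x2 hx1y2)
  have hqc : d x2 y1 ≠ c :=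
    keyc x2 y1 (Ne.symm hy1x2) (pair_ne_left (Ne.symm hx1x2) (Ne.symm hy1x2))
      (pair_ne_right hy1x2 hy1y2)
  have hrc : d y1 y2 ≠ c :=
    keyc y1 y2 hy1y2 (pair_ne_right (Ne.symm hx1y2) (Ne.symm hy1y2))
      (pair_ne_left hy1x2 hy1y2)
  have hsc : d y2 x1 ≠ c :=
    keyc y2 x1 (Ne.symm hx1y2) (pair_ne_left (Ne.symm hx1y2) (Ne.symm hy1y2))
      (pair_ne_right hx1x2 hx1y2)
  have hpq : d x1 x2 ≠ d x2 y1 :=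
    keyd x1 x2 x2 y1 hx1x2 (Ne.symm hy1x2) hpc (pair_ne_left hx1x2 hn11)
  have hprr : d x1 x2 ≠ d y1 y2 :=
    keyd x1 x2 y1 y2 hx1x2 hy1y2 hpc (pair_ne_left hn11 hx1y2)
  have hps : d x1 x2 ≠ d y2 x1 :=
    keyd x1 x2 y2 x1 hx1x2 (Ne.symm hx1y2) hpc (pair_ne_right hn22 (Ne.symm hx1x2))
  have hqr : d x2 y1 ≠ d y1 y2 :=
    keyd x2 y1 y1 y2 (Ne.symm hy1x2) hy1y2 hqc (pair_ne_left (Ne.symm hy1x2) hn22)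
  have hqss : d x2 y1 ≠ d y2 x1 :=
    keyd x2 y1 y2 x1 (Ne.symm hy1x2) (Ne.symm hx1y2) hqc (pair_ne_left hn22 (Ne.symm hx1x2))
  have hrss : d y1 y2 ≠ d y2 x1 :=
    keyd y1 y2 y2 x1 hy1y2 (Ne.symm hx1y2) hrc (pair_ne_left hy1y2 (Ne.symm hn11))
  have hpD : d x1 x2 ∈ DistSet d := ⟨x1, x2, hx1x2, rfl⟩
  have hqD : d x2 y1 ∈ DistSet d := ⟨x2, y1, Ne.symm hy1x2, rfl⟩
  have hrD : d y1 y2 ∈ DistSet d := ⟨y1, y2, hy1y2, rfl⟩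
  have hsD : d y2 x1 ∈ DistSet d := ⟨y2, x1, Ne.symm hx1y2, rfl⟩
  have hSfin : ({w ∈ DistSet d | w < c}).Finite := by
    rw [hDS]
    exact (((((Set.finite_singleton c).insert (d y2 x1)).insert (d y1 y2)).insert
      (d x2 y1)).insert (d x1 x2)).subset (Set.sep_subset _ _)
  have hcontra3 : ∀ a b e : ℝ, a ∈ DistSet d → b ∈ DistSet d → e ∈ DistSet d →
      a ≠ b → a ≠ e → b ≠ e → a < c → b < c → e < c → False := by
    intro a b e ha hb he hab hae hbe ha' hb' he'
    have hsub : ({a, b, e} : Set ℝ) ⊆ {w ∈ DistSet d | w < c} := by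
      rintro w (rfl | rfl | rfl) <;> exact ⟨by assumption, by assumption⟩
    have h3 : ({a, b, e} : Set ℝ).ncard = 3 := by
      rw [Set.ncard_insert_of_notMem (by simp [hab, hae])
        ((Set.finite_singleton e).insert b), Set.ncard_pair hbe]
    have := Set.ncard_le_ncard hsub hSfin
    rw [hmid, h3] at this
    omega
  have hcontra1 : ∀ a : ℝ, {w ∈ DistSet d | w < c} ⊆ {a} → False := by
    intro a hsub
    have := Set.ncard_le_ncard hsub (Set.finite_singleton a)
    rw [hmid, Set.ncard_singleton] at this
    omega
  have hunivP : ∀ z : Y, z = x1 ∨ z = x2 ∨ z = y1 ∨ z = y2 := by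
    intro z; rcases huniv z with h | h | h | h <;> tauto
  rcases lt_or_gt_of_ne hpc with hp' | hp' <;> rcases lt_or_gt_of_ne hqc with hq' | hq' <;>
    rcases lt_or_gt_of_ne hrc with hr' | hr' <;> rcases lt_or_gt_of_ne hsc with hs' | hs'
  -- 1 : p< q< r< s<
  · exact absurd (hcontra3 _ _ _ hpD hqD hrD hpq hprr hqr hp' hq' hr') id
  -- 2 : p< q< r< s>
  · exact absurd (hcontra3 _ _ _ hpD hqD hrD hpq hprr hqr hp' hq' hr') id
  -- 3 : p< q< r> s<
  · exact absurd (hcontra3 _ _ _ hpD hqD hsD hpq hps hqss hp' hq' hs') id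
  -- 4 : p< q< r> s>  : big {r,s}, shared vertex y2 : u=y1 m=y2 w=x1
  · refine iff_of_true ?_ ?_
    · refine ubpp_of_s15 d h0 hsym c x1 y1 x2 y2 hcc huq hpc hqc hrc hsc ?_ ?_
      · exact fun h => absurd h.1 (not_lt.mpr hp'.le)
      · exact fun h => absurd h.1 (not_lt.mpr hq'.le)
    · refine nosim' d hp' hq' hr' hs' hpq hrss ?_ y1 y2 x1 (Ne.symm hn11) hy1y2
        (Ne.symm hx1y2) hr' hs'
      rw [hDS]; ext w; simp only [Set.mem_insert_iff, Set.mem_singleton_iff]; tauto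
  -- 5 : p< q> r< s<
  · exact absurd (hcontra3 _ _ _ hpD hrD hsD hprr hps hrss hp' hr' hs') id
  -- 6 : p< q> r< s>  : big {q,s}
  · refine iff_of_false ?_ (not_not_intro ?_)
    · exact notUBPP d h0 x1 x2 y1 y2 hx1x2 hn11 hx1y2 (Ne.symm hy1x2) hn22 c g11 g22
        (by rw [gss]; exact hs'.le) hq'.le
    · rcases lt_or_gt_of_ne hqss with h1 | h1 <;> rcases lt_or_gt_of_ne hprr with h2 | h2
      -- q<s, p<r : (x1,y2,y1,x2), v=(p,r,c,q,s)
      · refine sim d hsym x1 y2 y1 x2 hx1y2 hn11 hx1x2 (Ne.symm hy1y2) (Ne.symm hn22) hy1x2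
          (fun z => by rcases huniv z with h | h | h | h <;> tauto)
          h2 hr' hq' h1 rfl grs g11 gs22 gqs gss ?_
        rw [hDS]; ext w; simp only [Set.mem_insert_iff, Set.mem_singleton_iff]; tauto
      -- q<s, r<p : (y2,x1,x2,y1), v=(r,p,c,q,s)
      · refine sim d hsym y2 x1 x2 y1 (Ne.symm hx1y2) (Ne.symm hn22) hy1y2.symm hx1x2 hn11
          (Ne.symm hy1x2) (fun z => by rcases huniv z with h | h | h | h <;> tauto)
          h2 hp' hq' h1 grs rfl gs22 g11 rfl rfl ?_
        rw [hDS]; ext w; simp only [Set.mem_insert_iff, Set.mem_singleton_iff]; tauto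
      -- s<q, p<r : (x2,y1,y2,x1), v=(p,r,c,s,q)
      · refine sim d hsym x2 y1 y2 x1 (Ne.symm hy1x2) hn22 (Ne.symm hx1x2) hy1y2
          (Ne.symm hn11) (Ne.symm hx1y2) (fun z => by rcases huniv z with h | h | h | h <;> tauto)
          h2 hr' hs' h1 gps rfl g22 gs11 rfl rfl ?_
        rw [hDS]; ext w; simp only [Set.mem_insert_iff, Set.mem_singleton_iff]; tauto
      -- s<q, r<p : (y1,x2,x1,y2), v=(r,p,c,s,q)
      · refine sim d hsym y1 x2 x1 y2 hy1x2 (Ne.symm hn11) hy1y2 (Ne.symm hx1x2) hn22 hx1y2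
          (fun z => by rcases huniv z with h | h | h | h <;> tauto)
          h2 hp' hs' h1 rfl gps gs11 g22 gss gqs ?_
        rw [hDS]; ext w; simp only [Set.mem_insert_iff, Set.mem_singleton_iff]; tauto
  -- 7 : p< q> r> s<  : big {q,r}, shared y1 : u=x2 m=y1 w=y2
  · refine iff_of_true ?_ ?_
    · refine ubpp_of_s15 d h0 hsym c x1 y1 x2 y2 hcc huq hpc hqc hrc hsc ?_ ?_
      · exact fun h => absurd h.1 (not_lt.mpr hp'.le)
      · exact fun h => absurd h.2 (not_lt.mpr hs'.le)
    · refine nosim' d hp' hs' hq' hr' hps hqr ?_ x2 y1 y2 hn22 (Ne.symm hy1x2) hy1y2 hq' hr'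
      rw [hDS]; ext w; simp only [Set.mem_insert_iff, Set.mem_singleton_iff]; tauto
  -- 8 : p< q> r> s>
  · refine absurd (hcontra1 (d x1 x2) ?_) id
    rintro w ⟨hwD, hlt⟩
    rw [hDS] at hwD
    rcases hwD with rfl | rfl | rfl | rfl | rfl
    · exact rfl
    all_goals (exfalso; linarith)
  -- 9 : p> q< r< s<
  · exact absurd (hcontra3 _ _ _ hqD hrD hsD hqr hqss hrss hq' hr' hs') id
  -- 10 : p> q< r< s>  : big {p,s}, shared x1 : u=x2 m=x1 w=y2
  · refine iff_of_true ?_ ?_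
    · refine ubpp_of_s15 d h0 hsym c x1 y1 x2 y2 hcc huq hpc hqc hrc hsc ?_ ?_
      · exact fun h => absurd h.2 (not_lt.mpr hr'.le)
      · exact fun h => absurd h.1 (not_lt.mpr hq'.le)
    · refine nosim' d hq' hr' hp' hs' hqr hps ?_ x2 x1 y2 hn22 (Ne.symm hx1x2) hx1y2
        (by rw [gps]; exact hp') (by rw [gss]; exact hs')
      rw [hDS]; ext w; simp only [Set.mem_insert_iff, Set.mem_singleton_iff]; tauto
  -- 11 : p> q< r> s<  : big {p,r}
  · refine iff_of_false ?_ (not_not_intro ?_)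
    · exact notUBPP d h0 x1 y2 y1 x2 hx1y2 hn11 hx1x2 (Ne.symm hy1y2) (Ne.symm hn22) c g11 gs22
        hp'.le (by rw [grs]; exact hr'.le)
    · rcases lt_or_gt_of_ne hprr with h1 | h1 <;> rcases lt_or_gt_of_ne hqss with h2 | h2
      -- p<r, q<s : (y1,y2,x1,x2), v=(q,s,c,p,r)
      · refine sim d hsym y1 y2 x1 x2 hy1y2 (Ne.symm hn11) hy1x2 (Ne.symm hx1y2)
          (Ne.symm hn22) hx1x2 (fun z => by rcases huniv z with h | h | h | h <;> tauto)
          h2 hs' hp' h1 gqs rfl gs11 gs22 rfl rfl ?_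
        rw [hDS]; ext w; simp only [Set.mem_insert_iff, Set.mem_singleton_iff]; tauto
      -- p<r, s<q : (y2,y1,x2,x1), v=(s,q,c,p,r)
      · refine sim d hsym y2 y1 x2 x1 (Ne.symm hy1y2) (Ne.symm hn22) hx1y2.symm hy1x2
          (Ne.symm hn11) (Ne.symm hx1x2) (fun z => by rcases huniv z with h | h | h | h <;> tauto)
          h2 hq' hp' h1 rfl gqs gs22 gs11 gps grs ?_
        rw [hDS]; ext w; simp only [Set.mem_insert_iff, Set.mem_singleton_iff]; tauto
      -- r<p, q<s : (x2,x1,y2,y1), v=(q,s,c,r,p)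
      · refine sim d hsym x2 x1 y2 y1 (Ne.symm hx1x2) hn22 (Ne.symm hy1x2) hx1y2
          hn11 (Ne.symm hy1y2) (fun z => by rcases huniv z with h | h | h | h <;> tauto)
          h2 hs' hr' h1 rfl gss g22 g11 grs gps ?_
        rw [hDS]; ext w; simp only [Set.mem_insert_iff, Set.mem_singleton_iff]; tauto
      -- r<p, s<q : (x1,x2,y1,y2), v=(s,q,c,r,p)
      · refine sim d hsym x1 x2 y1 y2 hx1x2 hn11 hx1y2 (Ne.symm hy1x2) hn22 hy1y2
          (fun z => by rcases huniv z with h | h | h | h <;> tauto)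
          h2 hq' hr' h1 gss rfl g11 g22 rfl rfl ?_
        rw [hDS]; ext w; simp only [Set.mem_insert_iff, Set.mem_singleton_iff]; tauto
  -- 12 : p> q< r> s>
  · refine absurd (hcontra1 (d x2 y1) ?_) id
    rintro w ⟨hwD, hlt⟩
    rw [hDS] at hwD
    rcases hwD with rfl | rfl | rfl | rfl | rfl
    · exact absurd hlt (not_lt.mpr hp'.le)
    · exact rfl
    all_goals (exfalso; linarith)
  -- 13 : p> q> r< s<  : big {p,q}, shared x2 : u=x1 m=x2 w=y1
  · refine iff_of_true ?_ ?_
    · refine ubpp_of_s15 d h0 hsym c x1 y1 x2 y2 hcc huq hpc hqc hrc hsc ?_ ?_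
      · exact fun h => absurd h.2 (not_lt.mpr hr'.le)
      · exact fun h => absurd h.2 (not_lt.mpr hs'.le)
    · refine nosim' d hr' hs' hp' hq' hrss hpq ?_ x1 x2 y1 hn11 hx1x2 (Ne.symm hy1x2) hp' hq'
      rw [hDS]; ext w; simp only [Set.mem_insert_iff, Set.mem_singleton_iff]; tauto
  -- 14 : p> q> r< s>
  · refine absurd (hcontra1 (d y1 y2) ?_) id
    rintro w ⟨hwD, hlt⟩
    rw [hDS] at hwD
    rcases hwD with rfl | rfl | rfl | rfl | rfl
    · exact absurd hlt (not_lt.mpr hp'.le)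
    · exact absurd hlt (not_lt.mpr hq'.le)
    · exact rfl
    all_goals (exfalso; linarith)
  -- 15 : p> q> r> s<
  · refine absurd (hcontra1 (d y2 x1) ?_) id
    rintro w ⟨hwD, hlt⟩
    rw [hDS] at hwD
    rcases hwD with rfl | rfl | rfl | rfl | rfl
    · exact absurd hlt (not_lt.mpr hp'.le)
    · exact absurd hlt (not_lt.mpr hq'.le)
    · exact absurd hlt (not_lt.mpr hr'.le)
    · exact rfl
    · exact absurd hlt (lt_irrefl _)
  -- 16 : p> q> r> s>
  · refine absurd (hcontra1 (d x1 x2) ?_) id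
    rintro w ⟨hwD, hlt⟩
    rw [hDS] at hwD
    rcases hwD with rfl | rfl | rfl | rfl | rfl
    · exact rfl
    all_goals (exfalso; linarith)
end
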